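/- arXiv:2109.14140 — 2 statements merged into one kernel-verified Lean document; each statement's English description precedes it below -/
import Mathlib

section
/- Let (v,b) satisfy condition (C2) with associated pair (λ,ε). Set t = v/2 if ε ≡ v/2 (mod 2) and t = v/2 + 1 if ε ≢ v/2 (mod 2). Then every triple system TS(v;b) (V,𝓕) satisfies Σ_{{x,y}∈binom(V,2)} (λ_{x,y})² ≥ binom(v,2)·λ² + 2ελ + t, and equality holds exactly when the defect is 1 and the defect graph D = D_1 ∪ D_{−1} has exactly t edges with |D_1| − |D_{−1}| = ε; moreover in the equality case D is necessarily a perfect matching of V with |D_1| = (v+2ε)/4 when t = v/2, and the vertex-disjoint union of a star K_{1,3} and a perfect matching on the remaining v−4 points with |D_1| = (v+2+2ε)/4 when t = v/2 + 1. -/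
namespace DataPlacement

open Finset

variable {α : Type*} [DecidableEq α]

/-- Number of blocks of the family `F` (with multiplicity) containing `T`. -/
def lamF (F : Multiset (Finset α)) (T : Finset α) : ℕ :=
  Multiset.card (F.filter fun B => T ⊆ B)

/-- Triple system with `b` blocks on a point set `X` of size `v`. -/
def IsTSOn (X : Finset α) (v b : ℕ) (F : Multiset (Finset α)) : Prop :=
  X.card = v ∧ Multiset.card F = b ∧ ∀ B ∈ F, B.card = 3 ∧ B ⊆ X

/-- `(l, e)` is the pair associated with `(v, b)`:
`3b = l·v(v−1)/2 + e` with `−v/2 < e < v/2`. -/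
def AssocPair (v b l : ℕ) (e : ℤ) : Prop :=
  6 * (b : ℤ) = (l : ℤ) * v * ((v : ℤ) - 1) + 2 * e ∧
    -(v : ℤ) < 2 * e ∧ 2 * e < (v : ℤ)

/-- Condition (C1). -/
def CondC1 (v b : ℕ) : Prop :=
  v % 3 = 2 ∧ ∃ l : ℕ, 0 < l ∧
    ((v % 6 = 5 ∧ (l % 3 = 1 ∨ l % 3 = 2)) ∨
     (v % 6 = 2 ∧ (l % 6 = 2 ∨ l % 6 = 4))) ∧
    (b = l * v * (v - 1) / 6 ∨ b = (l * v * (v - 1) + 5) / 6)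

/-- Condition (C2). -/
def CondC2 (v b : ℕ) : Prop :=
  v % 2 = 0 ∧ ∃ l : ℕ, 0 < l ∧ l % 2 = 1 ∧
    (l : ℤ) * v * ((v : ℤ) - 1) - v < 6 * (b : ℤ) ∧
    6 * (b : ℤ) < (l : ℤ) * v * ((v : ℤ) - 1) + v

/-- Pairs of points of `X` whose block count equals `l + i`. -/
def Dlev (X : Finset α) (F : Multiset (Finset α)) (l : ℕ) (i : ℤ) :
    Finset (Finset α) :=
  (X.powersetCard 2).filter fun p => (lamF F p : ℤ) = (l : ℤ) + i

/-- Every pair of points of `X` lies in `l−1`, `l`, or `l+1` blocks. -/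
def PairRangeOn (X : Finset α) (F : Multiset (Finset α)) (l : ℕ) : Prop :=
  ∀ p ∈ X.powersetCard 2,
    (l : ℤ) - 1 ≤ (lamF F p : ℤ) ∧ (lamF F p : ℤ) ≤ (l : ℤ) + 1

def IsTriangle (D : Finset (Finset α)) : Prop :=
  ∃ x y z : α, x ≠ y ∧ x ≠ z ∧ y ≠ z ∧
    D = {({x, y} : Finset α), {y, z}, {x, z}}

def IsFourCycle (D : Finset (Finset α)) : Prop :=
  ∃ x y z w : α, x ≠ y ∧ x ≠ z ∧ x ≠ w ∧ y ≠ z ∧ y ≠ w ∧ z ≠ w ∧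
    D = {({x, y} : Finset α), {y, z}, {z, w}, {x, w}}

/-- `D` is a perfect matching on the point set `X`. -/
def IsPerfectMatchingOn (X : Finset α) (D : Finset (Finset α)) : Prop :=
  (∀ p ∈ D, p.card = 2 ∧ p ⊆ X) ∧ ∀ x ∈ X, ∃! p, p ∈ D ∧ x ∈ p

/-- Defect-graph shape required for nearly 2-balance under (C1). -/
def C1ShapeOn (X : Finset α) (F : Multiset (Finset α)) (l : ℕ) (e : ℤ) : Prop :=
  (e = 1 ∧ IsTriangle (Dlev X F l 1 ∪ Dlev X F l (-1)) ∧
     (Dlev X F l 1).card = 2 ∧ (Dlev X F l (-1)).card = 1) ∨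
  (e = -1 ∧ IsTriangle (Dlev X F l 1 ∪ Dlev X F l (-1)) ∧
     (Dlev X F l 1).card = 1 ∧ (Dlev X F l (-1)).card = 2) ∨
  (e = 2 ∧ IsFourCycle (Dlev X F l 1 ∪ Dlev X F l (-1)) ∧
     (Dlev X F l 1).card = 3 ∧ (Dlev X F l (-1)).card = 1) ∨
  (e = -2 ∧ IsFourCycle (Dlev X F l 1 ∪ Dlev X F l (-1)) ∧
     (Dlev X F l 1).card = 1 ∧ (Dlev X F l (-1)).card = 3)

/-- Defect-graph shape required for nearly 2-balance under (C2)
(here `v = X.card`). -/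
def C2ShapeOn (X : Finset α) (v : ℕ) (F : Multiset (Finset α)) (l : ℕ) (e : ℤ) : Prop :=
  (((v : ℤ) - 2 * e) % 4 = 0 ∧
    IsPerfectMatchingOn X (Dlev X F l 1 ∪ Dlev X F l (-1)) ∧
    4 * ((Dlev X F l 1).card : ℤ) = (v : ℤ) + 2 * e ∧
    4 * ((Dlev X F l (-1)).card : ℤ) = (v : ℤ) - 2 * e) ∨
  (((v : ℤ) - 2 * e) % 4 ≠ 0 ∧
    ∃ (c a₂ a₃ a₄ : α) (star : Finset (Finset α)),
      c ∈ X ∧ a₂ ∈ X ∧ a₃ ∈ X ∧ a₄ ∈ X ∧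
      c ≠ a₂ ∧ c ≠ a₃ ∧ c ≠ a₄ ∧ a₂ ≠ a₃ ∧ a₂ ≠ a₄ ∧ a₃ ≠ a₄ ∧
      star = {({c, a₂} : Finset α), {c, a₃}, {c, a₄}} ∧
      star ⊆ Dlev X F l 1 ∪ Dlev X F l (-1) ∧
      IsPerfectMatchingOn (X \ {c, a₂, a₃, a₄})
        ((Dlev X F l 1 ∪ Dlev X F l (-1)) \ star) ∧
      (((star ∩ Dlev X F l 1).card = 2 ∧ (star ∩ Dlev X F l (-1)).card = 1 ∧
          4 * (((Dlev X F l 1) \ star).card : ℤ) = (v : ℤ) - 6 + 2 * e ∧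
          4 * (((Dlev X F l (-1)) \ star).card : ℤ) = (v : ℤ) - 2 - 2 * e) ∨
        ((star ∩ Dlev X F l 1).card = 1 ∧ (star ∩ Dlev X F l (-1)).card = 2 ∧
          4 * (((Dlev X F l 1) \ star).card : ℤ) = (v : ℤ) - 2 + 2 * e ∧
          4 * (((Dlev X F l (-1)) \ star).card : ℤ) = (v : ℤ) - 6 - 2 * e)))

/-- `F` is 3-balanced on `X`: the multiplicities of any two triples of `X`
differ by at most one. -/
def ThreeBalancedOn (X : Finset α) (F : Multiset (Finset α)) : Prop :=
  ∀ T₁ ∈ X.powersetCard 3, ∀ T₂ ∈ X.powersetCard 3, F.count T₁ ≤ F.count T₂ + 1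

/-- Nearly well-balanced triple system NWBTS(v;b) on the point set `X`. -/
def IsNWBTSOn (X : Finset α) (v b : ℕ) (F : Multiset (Finset α)) : Prop :=
  IsTSOn X v b F ∧ ThreeBalancedOn X F ∧
  ∃ (l : ℕ) (e : ℤ), 0 < l ∧ AssocPair v b l e ∧ PairRangeOn X F l ∧
    ((CondC1 v b ∧ C1ShapeOn X F l e) ∨ (CondC2 v b ∧ C2ShapeOn X v F l e))

/-- `B` is an S_mu(2,3,·) design on the point set `X`. -/
def IsSDesignOn (X : Finset α) (mu : ℕ) (B : Multiset (Finset α)) : Prop :=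
  (∀ A ∈ B, A.card = 3 ∧ A ⊆ X) ∧ ∀ p ∈ X.powersetCard 2, lamF B p = mu

/-- `B` is a GDD_mu(2,3,·) of type `1^{·}u^1` on `X` with long group `U`. -/
def IsGDD1u (X : Finset α) (mu u : ℕ) (U : Finset α) (B : Multiset (Finset α)) : Prop :=
  U ⊆ X ∧ U.card = u ∧
  (∀ A ∈ B, A.card = 3 ∧ A ⊆ X ∧ (A ∩ U).card ≤ 1) ∧
  ∀ p ∈ X.powersetCard 2, ¬ p ⊆ U → lamF B p = mu

/-- `B` is a GDD_mu(2,3,·) with group family `G`. -/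
def IsGDDgroups (mu : ℕ) {n : ℕ} (G : Fin n → Finset α) (B : Multiset (Finset α)) : Prop :=
  (∀ A ∈ B, A.card = 3 ∧ A ⊆ Finset.univ.biUnion G ∧ ∀ i, (A ∩ G i).card ≤ 1) ∧
  ∀ x y : α, x ≠ y → (∃ i j, i ≠ j ∧ x ∈ G i ∧ y ∈ G j) → lamF B {x, y} = mu

/-- Nearly group divisible design NGDD(2,3,·) of type `2^{(m,n)}u^1` on `X`. -/
def IsNGDD (X : Finset α) (m n u : ℕ) (G : Fin (m + n) → Finset α) (U : Finset α)
    (B : Multiset (Finset α)) : Prop :=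
  (∀ i, (G i).card = 2 ∧ G i ⊆ X) ∧ U.card = u ∧ U ⊆ X ∧
  (∀ i j, i ≠ j → Disjoint (G i) (G j)) ∧ (∀ i, Disjoint (G i) U) ∧
  U ∪ Finset.univ.biUnion G = X ∧
  (∀ A ∈ B, A.card = 3 ∧ A ⊆ X) ∧
  (∀ i : Fin (m + n), (i : ℕ) < m → lamF B (G i) = 2) ∧
  (∀ i : Fin (m + n), m ≤ (i : ℕ) → lamF B (G i) = 0) ∧
  (∀ p ∈ U.powersetCard 2, lamF B p = 0) ∧
  (∀ p ∈ X.powersetCard 2, (∀ i, ¬ p ⊆ G i) → ¬ p ⊆ U → lamF B p = 1)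

/-- Candelabra system CS(g^n : s) on `X` with stem `S` and groups `G`. -/
def IsCS (X : Finset α) (g n s : ℕ) (S : Finset α) (G : Fin n → Finset α)
    (A : Multiset (Finset α)) : Prop :=
  S.card = s ∧ S ⊆ X ∧ (∀ i, (G i).card = g ∧ G i ⊆ X) ∧
  (∀ i j, i ≠ j → Disjoint (G i) (G j)) ∧ (∀ i, Disjoint (G i) S) ∧
  S ∪ Finset.univ.biUnion G = X ∧
  (∀ B ∈ A, B.card = 3 ∧ B ⊆ X) ∧
  (∀ T ∈ X.powersetCard 3, (∀ i, ¬ T ⊆ S ∪ G i) → lamF A T = 1) ∧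
  (∀ T ∈ X.powersetCard 3, (∃ i, T ⊆ S ∪ G i) → lamF A T = 0)

/-- Partitionable candelabra system PCS(g^n : s). -/
def IsPCS (X : Finset α) (g n s : ℕ) (S : Finset α) (G : Fin n → Finset α)
    (A : Multiset (Finset α)) : Prop :=
  IsCS X g n s S G A ∧
  ∃ (Ax : α → Multiset (Finset α)) (Ai : Fin (s - 2) → Multiset (Finset α)),
    A = (∑ p ∈ X \ S, Ax p) + ∑ i, Ai i ∧
    (∀ i : Fin n, ∀ p ∈ G i, IsGDD1u X 1 (g + s) (G i ∪ S) (Ax p)) ∧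
    (∀ j, IsGDDgroups 1 G (Ai j))

/-- g-PCS_2((2ag)^n : s). -/
def IsGPCS2 (X : Finset α) (a g n s : ℕ) (S : Finset α) (G : Fin n → Finset α)
    (A : Multiset (Finset α)) : Prop :=
  IsCS X (2 * a * g) n s S G A ∧
  ∃ (P : Fin (g * n) → Multiset (Finset α)) (grp : Fin (g * n) → Fin n),
    (∑ i, P i) ≤ A ∧
    (∀ j : Fin n, (Finset.univ.filter fun i => grp i = j).card = g) ∧
    (∀ i, IsGDD1u X 2 (2 * a * g + s) (G (grp i) ∪ S) (P i))

/-- g-PCS_2^r((2ag)^n : s). -/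
def IsGPCS2r (X : Finset α) (a g n s r : ℕ) (S : Finset α) (G : Fin n → Finset α)
    (A : Multiset (Finset α)) : Prop :=
  IsCS X (2 * a * g) n s S G A ∧
  ∃ (P : Fin (g * n) → Multiset (Finset α)) (grp : Fin (g * n) → Fin n),
    (∑ i, P i) ≤ A ∧
    (∀ j : Fin n, (Finset.univ.filter fun i => grp i = j).card = g) ∧
    (∀ i, IsGDD1u X 2 (2 * a * g + s) (G (grp i) ∪ S) (P i)) ∧
    ∃ (i : Fin (g * n)) (N : Multiset (Finset α))
      (Gs : Fin (r + (a * g * (n - 1) - r)) → Finset α),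
      N ≤ P i ∧ IsNGDD X r (a * g * (n - 1) - r) (2 * a * g + s) Gs (G (grp i) ∪ S) N

/-- GDD(3,3,·) of type `g^k` on `X` with groups `H`. -/
def IsGDD3On (X : Finset α) (g : ℕ) {k : ℕ} (H : Fin k → Finset α)
    (A : Multiset (Finset α)) : Prop :=
  (∀ i, (H i).card = g ∧ H i ⊆ X) ∧ (∀ i j, i ≠ j → Disjoint (H i) (H j)) ∧
  Finset.univ.biUnion H = X ∧
  (∀ B ∈ A, B.card = 3 ∧ B ⊆ X ∧ ∀ i, (B ∩ H i).card ≤ 1) ∧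
  (∀ T ∈ X.powersetCard 3, (∀ i, (T ∩ H i).card ≤ 1) → lamF A T = 1)

/-- `B` is a GDD_mu(2,3,·) on the points not in the omitted group `H o`,
with group set `{H i : i ≠ o}`. -/
def IsGDDOmit (mu : ℕ) {k : ℕ} (H : Fin k → Finset α) (o : Fin k)
    (B : Multiset (Finset α)) : Prop :=
  (∀ A ∈ B, A.card = 3 ∧ Disjoint A (H o) ∧ ∀ i, (A ∩ H i).card ≤ 1) ∧
  ∀ x y : α, x ≠ y →
    (∃ i j, i ≠ j ∧ i ≠ o ∧ j ≠ o ∧ x ∈ H i ∧ y ∈ H j) → lamF B {x, y} = mu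

/-- PGDD_2((2g)^{n+1}). -/
def IsPGDD2 (g n : ℕ) (H : Fin (n + 1) → Finset (Fin (2 * g * (n + 1))))
    (A : Multiset (Finset (Fin (2 * g * (n + 1))))) : Prop :=
  IsGDD3On Finset.univ (2 * g) H A ∧
  ∃ (i0 : Fin (n + 1))
    (P : Fin (g * n + 2 * g) → Multiset (Finset (Fin (2 * g * (n + 1)))))
    (f : Fin (g * n + 2 * g) → Fin (n + 1)),
    A = ∑ i, P i ∧
    (∀ j, j ≠ i0 → (Finset.univ.filter fun i => f i = j).card = g) ∧
    (∀ i, f i ≠ i0 → IsGDDOmit 2 H (f i) (P i)) ∧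
    (∀ i, f i = i0 → IsGDDOmit 1 H i0 (P i))

/-- 1-FG(3,(K1,KT),n) of type 1^n. -/
def Is1FG (n : ℕ) (K1 KT : Set ℕ) (A1 AT : Multiset (Finset (Fin n))) : Prop :=
  (∀ B ∈ A1, B.card ∈ K1) ∧ (∀ B ∈ AT, B.card ∈ KT) ∧
  (∀ p ∈ (Finset.univ : Finset (Fin n)).powersetCard 2, lamF A1 p = 1) ∧
  (∀ T ∈ (Finset.univ : Finset (Fin n)).powersetCard 3, lamF (A1 + AT) T = 1)

/-- PICS_2^r((2g)^3 : 0). -/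
def IsPICS2 (g r : ℕ) (G : Fin 3 → Finset (Fin (6 * g)))
    (A : Multiset (Finset (Fin (6 * g)))) : Prop :=
  IsCS Finset.univ (2 * g) 3 0 (∅ : Finset (Fin (6 * g))) G A ∧
  ∃ P : Fin (4 * g - 2) → Multiset (Finset (Fin (6 * g))),
    A = ∑ i, P i ∧
    (∀ i : Fin (4 * g - 2), (i : ℕ) < 2 * g → IsSDesignOn Finset.univ 2 (P i)) ∧
    (∃ i : Fin (4 * g - 2), (i : ℕ) < 2 * g ∧
      ∃ (N : Multiset (Finset (Fin (6 * g))))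
        (Gs : Fin (r + (3 * g - r)) → Finset (Fin (6 * g))),
        N ≤ P i ∧ IsNGDD Finset.univ r (3 * g - r) 0 Gs ∅ N) ∧
    (∀ i : Fin (4 * g - 2), 2 * g ≤ (i : ℕ) → IsGDDgroups 1 G (P i))

/-- Number of ordered pairs of blocks of `F` whose intersection has exactly
`j` points. -/
def interCount (F : Multiset (Finset α)) (j : ℕ) : ℕ :=
  Multiset.card
    ((F.bind fun A => F.map fun B => (A, B)).filter fun p => (p.1 ∩ p.2).card = j)

/-- The polynomial `P(F, x) = Σ_{j=0}^{3} v_j x^j`. -/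
noncomputable def Pval (F : Multiset (Finset α)) (x : ℝ) : ℝ :=
  ∑ j ∈ Finset.range 4, (interCount F j : ℝ) * x ^ j

/-- Optimal data placement for triple replication. -/
def IsOptimalDP (v b : ℕ) (F : Multiset (Finset (Fin v))) : Prop :=
  IsTSOn Finset.univ v b F ∧
  ∀ F' : Multiset (Finset (Fin v)), IsTSOn Finset.univ v b F' →
    ∀ x : ℝ, 1 ≤ x → Pval F x ≤ Pval F' x


/-! ### Auxiliary lemmas for stmt_1 -/

private lemma lamF_cons (B : Finset α) (F : Multiset (Finset α)) (p : Finset α) :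
    lamF (B ::ₘ F) p = (if p ⊆ B then 1 else 0) + lamF F p := by
  simp only [lamF, Multiset.filter_cons]
  split <;> simp [Nat.add_comm]

private lemma filter_subset_block (X B : Finset α) (hB : B ⊆ X) :
    (X.powersetCard 2).filter (fun p => p ⊆ B) = B.powersetCard 2 := by
  ext p
  simp only [mem_filter, mem_powersetCard]
  exact ⟨fun h => ⟨h.2, h.1.2⟩, fun h => ⟨⟨h.1.trans hB, h.2⟩, h.1⟩⟩

private lemma sum_lamF_pairs (X : Finset α) (F : Multiset (Finset α))
    (hF : ∀ B ∈ F, B.card = 3 ∧ B ⊆ X) :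
    ∑ p ∈ X.powersetCard 2, lamF F p = 3 * Multiset.card F := by
  induction F using Multiset.induction with
  | empty => simp [lamF]
  | cons B F ih =>
    have hB := hF B (Multiset.mem_cons_self B F)
    have hF' : ∀ A ∈ F, A.card = 3 ∧ A ⊆ X := fun A hA => hF A (Multiset.mem_cons_of_mem hA)
    have h1 : ∑ p ∈ X.powersetCard 2, (if p ⊆ B then 1 else 0) = 3 := by
      rw [← Finset.card_filter, filter_subset_block X B hB.2, Finset.card_powersetCard, hB.1]
      rfl
    simp only [lamF_cons, Finset.sum_add_distrib, ih hF', h1, Multiset.card_cons]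
    ring

private lemma pair_eq (p : Finset α) (x : α) (h2 : p.card = 2) (hx : x ∈ p) :
    ∃ y, y ≠ x ∧ p = {x, y} := by
  have he : (p.erase x).card = 1 := by rw [Finset.card_erase_of_mem hx, h2]
  obtain ⟨y, hy⟩ := Finset.card_eq_one.mp he
  refine ⟨y, ?_, ?_⟩
  · have := Finset.mem_erase.mp (hy ▸ Finset.mem_singleton_self y)
    exact this.1
  · rw [← Finset.insert_erase hx, hy]

private lemma pairs_filter_eq_image (X B : Finset α) (x : α) (hBX : B ⊆ X) (hx : x ∈ B) :
    (X.powersetCard 2).filter (fun p => x ∈ p ∧ p ⊆ B)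
      = (B.erase x).image (fun y => {x, y}) := by
  ext p
  simp only [mem_filter, mem_powersetCard, mem_image, mem_erase]
  constructor
  · rintro ⟨⟨hpX, h2⟩, hxp, hpB⟩
    obtain ⟨y, hyx, hpy⟩ := pair_eq p x h2 hxp
    exact ⟨y, ⟨hyx, hpB (hpy ▸ by simp)⟩, hpy.symm⟩
  · rintro ⟨y, ⟨hyx, hyB⟩, rfl⟩
    have hsub : ({x, y} : Finset α) ⊆ B := by
      intro z hz; simp only [mem_insert, mem_singleton] at hz
      rcases hz with rfl | rfl; exacts [hx, hyB]
    exact ⟨⟨hsub.trans hBX, by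
      rw [Finset.card_insert_of_notMem (by simpa using (Ne.symm hyx)),
        Finset.card_singleton]⟩, by simp, hsub⟩

private lemma card_pairs_filter (X B : Finset α) (x : α) (hBX : B ⊆ X) :
    ((X.powersetCard 2).filter (fun p => x ∈ p ∧ p ⊆ B)).card
      = if x ∈ B then B.card - 1 else 0 := by
  split
  · next hx =>
    rw [pairs_filter_eq_image X B x hBX hx, Finset.card_image_of_injOn,
      Finset.card_erase_of_mem hx]
    intro y hy y' hy' h
    simp only [mem_coe, mem_erase] at hy hy'
    simp only [] at h
    have : y ∈ ({x, y'} : Finset α) := by rw [← h]; simp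
    simp only [mem_insert, mem_singleton] at this
    rcases this with rfl | rfl
    · exact absurd rfl hy.1
    · rfl
  · next hx =>
    rw [Finset.card_eq_zero, Finset.filter_eq_empty_iff]
    rintro p _ ⟨hxp, hpB⟩
    exact hx (hpB hxp)

private lemma even_sum_lamF_vertex (X : Finset α) (F : Multiset (Finset α))
    (hF : ∀ B ∈ F, B.card = 3 ∧ B ⊆ X) (x : α) :
    Even (∑ p ∈ (X.powersetCard 2).filter (fun p => x ∈ p), lamF F p) := by
  induction F using Multiset.induction with
  | empty => simp [lamF]
  | cons B F ih =>
    have hB := hF B (Multiset.mem_cons_self B F)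
    have hF' : ∀ A ∈ F, A.card = 3 ∧ A ⊆ X := fun A hA => hF A (Multiset.mem_cons_of_mem hA)
    simp only [lamF_cons, Finset.sum_add_distrib]
    refine Even.add ?_ (ih hF')
    rw [← Finset.card_filter, Finset.filter_filter, card_pairs_filter X B x hB.2, hB.1]
    split <;> decide

private lemma odd_card_filter_odd {β : Type*} [DecidableEq β] (s : Finset β) (f : β → ℤ)
    (h : Odd (∑ p ∈ s, f p)) :
    Odd (s.filter (fun p => Odd (f p))).card := by
  classical
  have hsplit := Finset.sum_filter_add_sum_filter_not s (fun p => Odd (f p)) f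
  have he : Even (∑ p ∈ s.filter (fun p => ¬ Odd (f p)), f p) :=
    Finset.even_sum _ (fun p hp => Int.not_odd_iff_even.mp (Finset.mem_filter.mp hp).2)
  set T := s.filter (fun p => Odd (f p)) with hT
  have h2 : Even (∑ p ∈ T, (f p - 1)) :=
    Finset.even_sum _ (fun p hp => by
      have := (Finset.mem_filter.mp hp).2
      exact Int.even_sub_one.mpr (Int.not_even_iff_odd.mpr this))
  have h3 : ∑ p ∈ T, f p = ∑ p ∈ T, (f p - 1) + T.card := by
    rw [Finset.sum_sub_distrib]; simp
  rw [← Int.odd_coe_nat]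
  obtain ⟨a, ha⟩ := he
  obtain ⟨c, hc⟩ := h2
  obtain ⟨k, hk⟩ := h
  exact ⟨k - a - c, by omega⟩

private lemma sum_odd_parity {β : Type*} (T : Finset β) (f : β → ℤ)
    (h : ∀ p ∈ T, Odd (f p)) :
    ∃ k : ℤ, ∑ p ∈ T, f p = T.card + 2 * k := by
  have h2 : Even (∑ p ∈ T, (f p - 1)) :=
    Finset.even_sum _ (fun p hp => Int.even_sub_one.mpr (Int.not_even_iff_odd.mpr (h p hp)))
  obtain ⟨c, hc⟩ := h2
  refine ⟨c, ?_⟩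
  have h3 : ∑ p ∈ T, f p = ∑ p ∈ T, (f p - 1) + T.card := by
    rw [Finset.sum_sub_distrib]; simp
  omega

private lemma sum_card_filter_mem (X : Finset α) (N : Finset (Finset α))
    (h2 : ∀ p ∈ N, p ⊆ X ∧ p.card = 2) :
    ∑ x ∈ X, (N.filter (fun p => x ∈ p)).card = 2 * N.card := by
  have h1 : ∀ x, (N.filter (fun p => x ∈ p)).card = ∑ p ∈ N, if x ∈ p then 1 else 0 :=
    fun x => Finset.card_filter _ _
  simp_rw [h1]
  rw [Finset.sum_comm]
  have h3 : ∀ p ∈ N, (∑ x ∈ X, if x ∈ p then 1 else 0) = 2 := by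
    intro p hp
    rw [← Finset.card_filter]
    have : X.filter (fun x => x ∈ p) = p := by
      rw [Finset.filter_mem_eq_inter]
      exact Finset.inter_eq_right.mpr (h2 p hp).1
    rw [this, (h2 p hp).2]
  rw [Finset.sum_congr rfl h3, Finset.sum_const, smul_eq_mul, mul_comm]

private lemma all_eq_one {β : Type*} {s : Finset β} {f : β → ℕ}
    (h1 : ∀ i ∈ s, 1 ≤ f i) (h2 : ∑ i ∈ s, f i = s.card) : ∀ i ∈ s, f i = 1 := by
  intro i hi
  by_contra hne
  have h4 : s.card < ∑ j ∈ s, f j := by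
    calc s.card = ∑ _j ∈ s, 1 := by simp
    _ < ∑ j ∈ s, f j :=
      Finset.sum_lt_sum h1 ⟨i, hi, by have := h1 i hi; omega⟩
  omega

private lemma exists_deg3 {β : Type*} [DecidableEq β] {s : Finset β} {f : β → ℕ}
    (h1 : ∀ i ∈ s, Odd (f i)) (h2 : ∑ i ∈ s, f i = s.card + 2) :
    ∃ c ∈ s, f c = 3 ∧ ∀ i ∈ s, i ≠ c → f i = 1 := by
  have hge : ∀ i ∈ s, 1 ≤ f i := fun i hi => (h1 i hi).pos
  have hex : ∃ c ∈ s, 2 ≤ f c := by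
    by_contra h
    push_neg at h
    have : ∑ i ∈ s, f i ≤ ∑ _i ∈ s, 1 :=
      Finset.sum_le_sum (fun i hi => by have := h i hi; omega)
    simp at this; omega
  obtain ⟨c, hc, hc2⟩ := hex
  have hc3 : 3 ≤ f c := by
    obtain ⟨k, hk⟩ := h1 c hc; omega
  have hsplit : f c + ∑ i ∈ s.erase c, f i = ∑ i ∈ s, f i := Finset.add_sum_erase s f hc
  have herase_ge : s.card - 1 ≤ ∑ i ∈ s.erase c, f i := by
    calc s.card - 1 = ∑ _i ∈ s.erase c, 1 := by simp [Finset.card_erase_of_mem hc]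
    _ ≤ ∑ i ∈ s.erase c, f i :=
      Finset.sum_le_sum (fun i hi => hge i (Finset.mem_of_mem_erase hi))
  have hcard1 : 1 ≤ s.card := Finset.card_pos.mpr ⟨c, hc⟩
  have hfc : f c = 3 := by omega
  have herase : ∑ i ∈ s.erase c, f i = (s.erase c).card := by
    rw [Finset.card_erase_of_mem hc]; omega
  refine ⟨c, hc, hfc, fun i hi hne => ?_⟩
  exact all_eq_one (fun j hj => hge j (Finset.mem_of_mem_erase hj)) herase i
    (Finset.mem_erase.mpr ⟨hne, hi⟩)

private lemma int_sq_bound (d : ℤ) :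
    (if Odd d then (1:ℤ) else 0) + (if 4 ≤ d^2 then 4 else 0) ≤ d^2 := by
  rcases Int.even_or_odd d with he | ho
  · rw [if_neg (by simpa using (Int.not_odd_iff_even.mpr he))]
    split
    · next h => linarith
    · positivity
  · rw [if_pos ho]
    have hne : d ≠ 0 := by rintro rfl; exact (by norm_num : ¬ Odd (0:ℤ)) ho
    have h1 : 1 ≤ d^2 := by
      rcases (by omega : 1 ≤ d ∨ d ≤ -1) with h | h <;> nlinarith
    split
    · next h =>
      have hodd : Odd (d^2) := ho.pow
      obtain ⟨k, hk⟩ := hodd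
      omega
    · linarith

private lemma int_small_of_not_sq (d : ℤ) (h : ¬ 4 ≤ d^2) : d = -1 ∨ d = 0 ∨ d = 1 := by
  by_contra hc
  push_neg at hc
  have : 2 ≤ d ∨ d ≤ -2 := by omega
  rcases this with h2 | h2 <;> nlinarith

/-- lower bound and equality characterization under (C2). -/
theorem stmt_1 (v b l : ℕ) (e : ℤ)
    (hC2 : CondC2 v b) (hassoc : AssocPair v b l e)
    (F : Multiset (Finset (Fin v))) (hF : IsTSOn Finset.univ v b F) :
    ((v.choose 2 : ℤ) * (l : ℤ) ^ 2 + 2 * e * l +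
        (if ((v : ℤ) - 2 * e) % 4 = 0 then (v : ℤ) / 2 else (v : ℤ) / 2 + 1) ≤
      ∑ p ∈ (Finset.univ : Finset (Fin v)).powersetCard 2, (lamF F p : ℤ) ^ 2) ∧
    ((∑ p ∈ (Finset.univ : Finset (Fin v)).powersetCard 2, (lamF F p : ℤ) ^ 2 =
        (v.choose 2 : ℤ) * (l : ℤ) ^ 2 + 2 * e * l +
          (if ((v : ℤ) - 2 * e) % 4 = 0 then (v : ℤ) / 2 else (v : ℤ) / 2 + 1)) ↔
      (PairRangeOn Finset.univ F l ∧
        (((Dlev Finset.univ F l 1 ∪ Dlev Finset.univ F l (-1)).card : ℤ) =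
          (if ((v : ℤ) - 2 * e) % 4 = 0 then (v : ℤ) / 2 else (v : ℤ) / 2 + 1)) ∧
        ((Dlev Finset.univ F l 1).card : ℤ) -
            ((Dlev Finset.univ F l (-1)).card : ℤ) = e)) ∧
    ((∑ p ∈ (Finset.univ : Finset (Fin v)).powersetCard 2, (lamF F p : ℤ) ^ 2 =
        (v.choose 2 : ℤ) * (l : ℤ) ^ 2 + 2 * e * l +
          (if ((v : ℤ) - 2 * e) % 4 = 0 then (v : ℤ) / 2 else (v : ℤ) / 2 + 1)) →
      ((((v : ℤ) - 2 * e) % 4 = 0 →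
          IsPerfectMatchingOn Finset.univ
            (Dlev Finset.univ F l 1 ∪ Dlev Finset.univ F l (-1)) ∧
          4 * ((Dlev Finset.univ F l 1).card : ℤ) = (v : ℤ) + 2 * e) ∧
       (((v : ℤ) - 2 * e) % 4 ≠ 0 →
          (∃ (c a₂ a₃ a₄ : Fin v) (star : Finset (Finset (Fin v))),
            c ≠ a₂ ∧ c ≠ a₃ ∧ c ≠ a₄ ∧ a₂ ≠ a₃ ∧ a₂ ≠ a₄ ∧ a₃ ≠ a₄ ∧
            star = {({c, a₂} : Finset (Fin v)), {c, a₃}, {c, a₄}} ∧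
            star ⊆ Dlev Finset.univ F l 1 ∪ Dlev Finset.univ F l (-1) ∧
            IsPerfectMatchingOn (Finset.univ \ {c, a₂, a₃, a₄})
              ((Dlev Finset.univ F l 1 ∪ Dlev Finset.univ F l (-1)) \ star)) ∧
          4 * ((Dlev Finset.univ F l 1).card : ℤ) = (v : ℤ) + 2 + 2 * e))) := by
  classical
  obtain ⟨hXcard, hFcard, hblocks⟩ := hF
  obtain ⟨hveven, l', hl'pos, hl'odd, hlb, hub⟩ := hC2
  obtain ⟨hb6, helb, heub⟩ := hassoc
  -- v is at least 2
  have hv2 : 2 ≤ v := by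
    by_contra h
    push_neg at h
    interval_cases v
    · norm_num at hlb hub; omega
    · norm_num at hveven
  have hvz : (2:ℤ) ≤ (v:ℤ) := by exact_mod_cast hv2
  have hvez : (v:ℤ) % 2 = 0 := by
    have : ((v % 2 : ℕ) : ℤ) = 0 := by exact_mod_cast hveven
    omega
  -- l equals the odd l' from condition (C2)
  have hll' : l = l' := by
    rcases eq_or_ne v 2 with rfl | hne
    · norm_num at hb6 hlb hub helb heub ⊢
      omega
    · have hv4 : (4:ℤ) ≤ (v:ℤ) := by
        have h3 : 4 ≤ v := by omega
        exact_mod_cast h3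
      have h1 : (l:ℤ) ≤ l' := by
        by_contra h
        have h' : (l':ℤ) + 1 ≤ l := by push_cast at h ⊢; omega
        nlinarith [mul_le_mul_of_nonneg_right
          (mul_le_mul_of_nonneg_right h' (by linarith : (0:ℤ) ≤ (v:ℤ)))
          (by linarith : (0:ℤ) ≤ (v:ℤ) - 1)]
      have h2 : (l':ℤ) ≤ l := by
        by_contra h
        have h' : (l:ℤ) + 1 ≤ l' := by push_cast at h ⊢; omega
        nlinarith [mul_le_mul_of_nonneg_right
          (mul_le_mul_of_nonneg_right h' (by linarith : (0:ℤ) ≤ (v:ℤ)))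
          (by linarith : (0:ℤ) ≤ (v:ℤ) - 1)]
      exact_mod_cast le_antisymm h1 h2
  have hlodd : (l:ℤ) % 2 = 1 := by
    have : ((l % 2 : ℕ) : ℤ) = 1 := by rw [hll']; exact_mod_cast hl'odd
    omega
  clear hlb hub hl'pos hl'odd hll'
  set P := (Finset.univ : Finset (Fin v)).powersetCard 2 with hPdef
  set d : Finset (Fin v) → ℤ := fun p => (lamF F p : ℤ) - l with hddef
  have hPmem : ∀ p ∈ P, p.card = 2 := by
    intro p hp
    rw [hPdef, Finset.mem_powersetCard] at hp
    exact hp.2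
  -- cardinality of the pair set
  have hPcardN : P.card = v.choose 2 := by
    rw [hPdef, Finset.card_powersetCard, Finset.card_univ, Fintype.card_fin]
  have hch : v.choose 2 * 2 = v * (v - 1) := by
    rw [Nat.choose_two_right]
    exact Nat.div_mul_cancel ((Nat.dvd_of_mod_eq_zero hveven).mul_right _)
  have hPcardZ : (P.card : ℤ) * 2 = (v:ℤ) * ((v:ℤ) - 1) := by
    have hc1 : ((v - 1 : ℕ) : ℤ) = (v:ℤ) - 1 := by
      have h1 : 1 ≤ v := by omega
      push_cast [h1]; ring
    rw [hPcardN, ← hc1]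
    exact_mod_cast hch
  -- total sum of pair degrees
  have hsumlam : ∑ p ∈ P, (lamF F p : ℤ) = 3 * b := by
    have h := sum_lamF_pairs Finset.univ F hblocks
    rw [hFcard] at h
    rw [hPdef]
    exact_mod_cast h
  have hsumd : ∑ p ∈ P, d p = e := by
    have h1 : ∑ p ∈ P, d p = (∑ p ∈ P, (lamF F p : ℤ)) - P.card * l := by
      simp [hddef, Finset.sum_sub_distrib, Finset.sum_const, mul_comm]
    rw [h1, hsumlam]
    have h2 : (3*(b:ℤ) - (P.card:ℤ) * l) * 2 = e * 2 := by
      linear_combination hb6 - (l:ℤ) * hPcardZ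
    linarith
  -- per-vertex parity
  have hvert : ∀ x : Fin v, Odd (∑ p ∈ P.filter (fun p => x ∈ p), d p) := by
    intro x
    obtain ⟨r, hr⟩ := even_sum_lamF_vertex Finset.univ F hblocks x
    have hcx : (P.filter (fun p => x ∈ p)).card = v - 1 := by
      have h1 : P.filter (fun p => x ∈ p)
          = P.filter (fun p => x ∈ p ∧ p ⊆ Finset.univ) := by
        apply Finset.filter_congr
        intro p _
        simp [Finset.subset_univ]
      rw [h1, hPdef, card_pairs_filter Finset.univ Finset.univ x (Finset.Subset.refl _)]
      simp [Finset.card_univ]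
    have hrz : ∑ p ∈ P.filter (fun p => x ∈ p), (lamF F p : ℤ) = 2 * (r:ℤ) := by
      have h2 : ∑ p ∈ P.filter (fun p => x ∈ p), lamF F p = 2 * r := by
        have hr' : ∑ p ∈ P.filter (fun p => x ∈ p), lamF F p = r + r := hr
        omega
      exact_mod_cast h2
    have hsd : ∑ p ∈ P.filter (fun p => x ∈ p), d p
        = 2 * (r:ℤ) - ((v:ℤ) - 1) * l := by
      have hcz : ((P.filter (fun p => x ∈ p)).card : ℤ) = (v:ℤ) - 1 := by
        rw [hcx]
        have h1 : 1 ≤ v := by omega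
        push_cast [h1]; ring
      have h3 : ∑ p ∈ P.filter (fun p => x ∈ p), d p
          = (∑ p ∈ P.filter (fun p => x ∈ p), (lamF F p : ℤ))
            - ((P.filter (fun p => x ∈ p)).card : ℤ) * l := by
        simp [hddef, Finset.sum_sub_distrib, Finset.sum_const, mul_comm]
      rw [h3, hrz, hcz]
    rw [hsd]
    have hq : (((v:ℤ) - 1) * l) % 2 = 1 := by
      obtain ⟨k1, hk1⟩ : ∃ k1, (v:ℤ) - 1 = 2 * k1 + 1 := ⟨((v:ℤ)-1)/2, by omega⟩
      obtain ⟨k2, hk2⟩ : ∃ k2, (l:ℤ) = 2 * k2 + 1 := ⟨(l:ℤ)/2, by omega⟩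
      rw [hk1, hk2]; ring_nf; omega
    rw [Int.odd_iff]
    omega
  -- the three distinguished pair classes
  set O := P.filter (fun p => Odd (d p)) with hOdef
  set M := P.filter (fun p => 4 ≤ (d p)^2) with hMdef
  set N := P.filter (fun p => d p ≠ 0) with hNdef
  have hOx : ∀ x : Fin v, Odd ((O.filter (fun p => x ∈ p)).card) := by
    intro x
    have h := odd_card_filter_odd (P.filter (fun p => x ∈ p)) d (hvert x)
    rwa [Finset.filter_comm] at h
  have hdegO : ∑ x : Fin v, (O.filter (fun p => x ∈ p)).card = 2 * O.card :=
    sum_card_filter_mem Finset.univ O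
      (fun p hp => ⟨Finset.subset_univ p, hPmem p (Finset.filter_subset _ _ hp)⟩)
  have hOlb : v ≤ 2 * O.card := by
    calc v = ∑ _x : Fin v, 1 := by simp
    _ ≤ ∑ x : Fin v, (O.filter (fun p => x ∈ p)).card :=
      Finset.sum_le_sum (fun x _ => (hOx x).pos)
    _ = 2 * O.card := hdegO
  have hMO : (O.card : ℤ) + 4 * M.card ≤ ∑ p ∈ P, (d p)^2 := by
    have h1 : ∑ p ∈ P, ((if Odd (d p) then (1:ℤ) else 0)
        + (if 4 ≤ (d p)^2 then 4 else 0)) ≤ ∑ p ∈ P, (d p)^2 :=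
      Finset.sum_le_sum (fun p _ => int_sq_bound (d p))
    rw [Finset.sum_add_distrib] at h1
    have h2 : ∑ p ∈ P, (if Odd (d p) then (1:ℤ) else 0) = O.card := by
      rw [Finset.sum_boole]
    have h3 : ∑ p ∈ P, (if 4 ≤ (d p)^2 then (4:ℤ) else 0) = 4 * M.card := by
      have h4 : ∀ p, (if 4 ≤ (d p)^2 then (4:ℤ) else 0)
          = 4 * (if 4 ≤ (d p)^2 then (1:ℤ) else 0) := by
        intro p; split <;> ring
      simp_rw [h4]
      rw [← Finset.mul_sum, Finset.sum_boole]
    rw [h2, h3] at h1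
    exact h1
  -- master identity
  have hmaster : ∑ p ∈ P, (lamF F p : ℤ)^2
      = (v.choose 2 : ℤ) * (l:ℤ)^2 + 2 * e * l + ∑ p ∈ P, (d p)^2 := by
    have hpoint : ∀ p ∈ P, (lamF F p : ℤ)^2
        = (l:ℤ)^2 + (d p) * (2 * l) + (d p)^2 := by
      intro p _
      simp only [hddef]
      ring
    rw [Finset.sum_congr rfl hpoint, Finset.sum_add_distrib, Finset.sum_add_distrib,
      Finset.sum_const, ← Finset.sum_mul, hsumd, nsmul_eq_mul, hPcardN]
    ring
  set SD := ∑ p ∈ P, (d p)^2 with hSDdef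
  have hvhalf : 2 * ((v:ℤ)/2) = (v:ℤ) := by omega
  set t := (if ((v:ℤ) - 2*e) % 4 = 0 then (v:ℤ)/2 else (v:ℤ)/2 + 1) with htdef
  have ht_ub : t ≤ (v:ℤ)/2 + 1 := by rw [htdef]; split <;> omega
  -- the defect classes as a filter
  have hDunion : Dlev Finset.univ F l 1 ∪ Dlev Finset.univ F l (-1)
      = P.filter (fun p => d p = 1 ∨ d p = -1) := by
    simp only [Dlev, ← Finset.filter_or, ← hPdef]
    apply Finset.filter_congr
    intro p _
    simp only [hddef]
    omega
  have hdisj : Disjoint (Dlev Finset.univ F l 1) (Dlev Finset.univ F l (-1)) := by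
    rw [Finset.disjoint_left]
    intro p h1 h2
    simp only [Dlev, Finset.mem_filter] at h1 h2
    omega
  have hcards : (Dlev Finset.univ F l 1).card + (Dlev Finset.univ F l (-1)).card
      = (Dlev Finset.univ F l 1 ∪ Dlev Finset.univ F l (-1)).card :=
    (Finset.card_union_of_disjoint hdisj).symm
  have hdiffsum : ((Dlev Finset.univ F l 1).card : ℤ)
      - ((Dlev Finset.univ F l (-1)).card : ℤ)
      = ∑ p ∈ Dlev Finset.univ F l 1 ∪ Dlev Finset.univ F l (-1), d p := by
    rw [Finset.sum_union hdisj]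
    have h1 : ∑ p ∈ Dlev Finset.univ F l 1, d p = (Dlev Finset.univ F l 1).card := by
      rw [Finset.sum_congr rfl (fun p hp => show d p = 1 from by
        simp only [Dlev, Finset.mem_filter] at hp
        simp only [hddef]
        omega)]
      simp
    have h2 : ∑ p ∈ Dlev Finset.univ F l (-1), d p
        = -((Dlev Finset.univ F l (-1)).card : ℤ) := by
      rw [Finset.sum_congr rfl (fun p hp => show d p = -1 from by
        simp only [Dlev, Finset.mem_filter] at hp
        simp only [hddef]
        omega)]
      simp
    rw [h1, h2]
    ring
  -- consequences of smallness (all defects in {-1,0,1})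
  have hNsmall : (∀ p ∈ P, d p = -1 ∨ d p = 0 ∨ d p = 1) →
      P.filter (fun p => d p = 1 ∨ d p = -1) = N := by
    intro hs
    apply Finset.filter_congr
    intro p hp
    have := hs p hp
    constructor <;> intro h <;> omega
  have hSDN : (∀ p ∈ P, d p = -1 ∨ d p = 0 ∨ d p = 1) → SD = N.card := by
    intro hs
    rw [hSDdef, hNdef,
      Finset.sum_congr rfl (fun p hp => show (d p)^2 = if d p ≠ 0 then (1:ℤ) else 0 from by
        rcases hs p hp with h|h|h <;> simp [h]),
      Finset.sum_boole]
  have hNO : (∀ p ∈ P, d p = -1 ∨ d p = 0 ∨ d p = 1) → N = O := by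
    intro hs
    apply Finset.filter_congr
    intro p hp
    rcases hs p hp with h|h|h <;> rw [h] <;> norm_num [Int.odd_iff]
  have hNsum : (∀ p ∈ P, d p = -1 ∨ d p = 0 ∨ d p = 1) → ∑ p ∈ N, d p = e := by
    intro hs
    rw [← hsumd, ← Finset.sum_filter_add_sum_filter_not P (fun p => d p ≠ 0) d, ← hNdef]
    have h0 : ∑ p ∈ P.filter (fun p => ¬ d p ≠ 0), d p = 0 :=
      Finset.sum_eq_zero (fun p hp => by
        have := (Finset.mem_filter.mp hp).2
        omega)
    rw [h0, add_zero]
  have hNparity : (∀ p ∈ P, d p = -1 ∨ d p = 0 ∨ d p = 1) →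
      ∃ k : ℤ, e = N.card + 2 * k := by
    intro hs
    obtain ⟨k, hk⟩ := sum_odd_parity N d (fun p hp => by
      have h1 := (Finset.mem_filter.mp hp).2
      rcases hs p (Finset.mem_filter.mp hp).1 with h|h|h
      · exact ⟨-1, by omega⟩
      · exact absurd h h1
      · exact ⟨0, by omega⟩)
    exact ⟨k, by rw [← hNsum hs, hk]⟩
  have hOlbZ : (v:ℤ) ≤ 2 * (O.card : ℤ) := by exact_mod_cast hOlb
  -- equality near the bound forces smallness
  have hsmall_of : SD ≤ (v:ℤ)/2 + 1 → ∀ p ∈ P, d p = -1 ∨ d p = 0 ∨ d p = 1 := by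
    intro hSD p hp
    refine int_small_of_not_sq _ (fun h4 => ?_)
    have hMne : (1:ℤ) ≤ (M.card : ℤ) := by
      exact_mod_cast Finset.card_pos.mpr ⟨p, Finset.mem_filter.mpr ⟨hp, h4⟩⟩
    linarith [hMO]
  -- the lower bound
  have hSDlb : t ≤ SD := by
    rcases eq_or_ne M.card 0 with hM | hM
    · have hMempty : M = ∅ := Finset.card_eq_zero.mp hM
      have hs : ∀ p ∈ P, d p = -1 ∨ d p = 0 ∨ d p = 1 := fun p hp =>
        int_small_of_not_sq _ (fun h4 =>
          (Finset.eq_empty_iff_forall_notMem.mp hMempty p)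
            (Finset.mem_filter.mpr ⟨hp, h4⟩))
      obtain ⟨k, hk⟩ := hNparity hs
      have hONb : v ≤ 2 * N.card := (hNO hs) ▸ hOlb
      have hONz : (v:ℤ) ≤ 2 * (N.card : ℤ) := by exact_mod_cast hONb
      rw [htdef, hSDN hs]
      split
      · next hc => omega
      · next hc => omega
    · have hMz : (1:ℤ) ≤ (M.card : ℤ) := by
        exact_mod_cast Nat.pos_of_ne_zero hM
      calc t ≤ (v:ℤ)/2 + 1 := ht_ub
      _ ≤ SD := by linarith [hMO]
  refine ⟨?_, ?_, ?_⟩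
  · -- Part 1: the lower bound
    rw [hmaster]
    linarith
  · -- Part 2: equality characterization
    constructor
    · intro heq
      have hSDt : SD = t := by rw [hmaster] at heq; linarith
      have hs := hsmall_of (by linarith)
      refine ⟨?_, ?_, ?_⟩
      · intro p hp
        have := hs p (by rw [hPdef]; exact hp)
        simp only [hddef] at this
        omega
      · rw [hDunion, hNsmall hs, ← hSDN hs]
        exact hSDt
      · rw [hdiffsum, hDunion, hNsmall hs, hNsum hs]
    · rintro ⟨hrange, hcard, -⟩
      have hs : ∀ p ∈ P, d p = -1 ∨ d p = 0 ∨ d p = 1 := by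
        intro p hp
        have := hrange p (by rw [← hPdef]; exact hp)
        simp only [hddef]
        omega
      rw [hmaster]
      have hSDt : SD = t := by
        rw [hSDN hs]
        rw [hDunion, hNsmall hs] at hcard
        exact hcard
      linarith
  · -- Part 3: structure of the defect graph
    intro heq
    have hSDt : SD = t := by rw [hmaster] at heq; linarith
    have hs := hsmall_of (by linarith)
    have hNcardt : (N.card : ℤ) = t := by rw [← hSDN hs]; exact hSDt
    have hdegsum : ∑ x : Fin v, (N.filter (fun p => x ∈ p)).card = 2 * N.card :=
      sum_card_filter_mem Finset.univ N
        (fun p hp => ⟨Finset.subset_univ p, hPmem p (Finset.filter_subset _ _ hp)⟩)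
    have hdegodd : ∀ x : Fin v, Odd ((N.filter (fun p => x ∈ p)).card) := fun x => by
      rw [hNO hs]; exact hOx x
    have hcardDiff : ((Dlev Finset.univ F l 1).card : ℤ)
        - ((Dlev Finset.univ F l (-1)).card : ℤ) = e := by
      rw [hdiffsum, hDunion, hNsmall hs, hNsum hs]
    have hcardSum : (Dlev Finset.univ F l 1).card + (Dlev Finset.univ F l (-1)).card
        = N.card := by
      rw [hcards, hDunion, hNsmall hs]
    constructor
    · intro hc4
      have htv : t = (v:ℤ)/2 := by rw [htdef, if_pos hc4]
      have hNv : 2 * N.card = v := by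
        have hz : (N.card : ℤ) = (v:ℤ)/2 := by rw [hNcardt, htv]
        omega
      have hdeg1 : ∀ x : Fin v, (N.filter (fun p => x ∈ p)).card = 1 := by
        intro x
        refine all_eq_one (fun i _ => (hdegodd i).pos) ?_ x (Finset.mem_univ x)
        rw [hdegsum, hNv, Finset.card_univ, Fintype.card_fin]
      constructor
      · rw [hDunion, hNsmall hs]
        constructor
        · intro p hp
          exact ⟨hPmem p (Finset.filter_subset _ _ hp), Finset.subset_univ p⟩
        · intro x _
          obtain ⟨q, hq⟩ := Finset.card_eq_one.mp (hdeg1 x)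
          have hqmem : q ∈ N.filter (fun p => x ∈ p) := hq ▸ Finset.mem_singleton_self q
          rw [Finset.mem_filter] at hqmem
          refine ⟨q, ⟨hqmem.1, hqmem.2⟩, ?_⟩
          rintro p' ⟨hp'N, hxp'⟩
          have hmem : p' ∈ N.filter (fun p => x ∈ p) := Finset.mem_filter.mpr ⟨hp'N, hxp'⟩
          rw [hq, Finset.mem_singleton] at hmem
          exact hmem
      · have hz : (N.card : ℤ) = (v:ℤ)/2 := by rw [hNcardt, htv]
        omega
    · intro hc4
      have htv : t = (v:ℤ)/2 + 1 := by rw [htdef, if_neg hc4]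
      have hNv : 2 * N.card = v + 2 := by
        have hz : (N.card : ℤ) = (v:ℤ)/2 + 1 := by rw [hNcardt, htv]
        omega
      obtain ⟨c, -, hc3, hrest⟩ := exists_deg3 (s := (Finset.univ : Finset (Fin v)))
        (f := fun x => (N.filter (fun p => x ∈ p)).card)
        (fun i _ => hdegodd i)
        (by rw [hdegsum, hNv, Finset.card_univ, Fintype.card_fin])
      obtain ⟨p1, p2, p3, h12, h13, h23, hNc⟩ := Finset.card_eq_three.mp hc3
      have hp1 : p1 ∈ N ∧ c ∈ p1 := by
        have h : p1 ∈ N.filter (fun p => c ∈ p) := by rw [hNc]; simp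
        exact ⟨(Finset.mem_filter.mp h).1, (Finset.mem_filter.mp h).2⟩
      have hp2 : p2 ∈ N ∧ c ∈ p2 := by
        have h : p2 ∈ N.filter (fun p => c ∈ p) := by rw [hNc]; simp
        exact ⟨(Finset.mem_filter.mp h).1, (Finset.mem_filter.mp h).2⟩
      have hp3 : p3 ∈ N ∧ c ∈ p3 := by
        have h : p3 ∈ N.filter (fun p => c ∈ p) := by rw [hNc]; simp
        exact ⟨(Finset.mem_filter.mp h).1, (Finset.mem_filter.mp h).2⟩
      obtain ⟨a2, ha2, hp1eq⟩ :=
        pair_eq p1 c (hPmem p1 (Finset.filter_subset _ _ hp1.1)) hp1.2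
      obtain ⟨a3, ha3, hp2eq⟩ :=
        pair_eq p2 c (hPmem p2 (Finset.filter_subset _ _ hp2.1)) hp2.2
      obtain ⟨a4, ha4, hp3eq⟩ :=
        pair_eq p3 c (hPmem p3 (Finset.filter_subset _ _ hp3.1)) hp3.2
      have ha23 : a2 ≠ a3 := fun h => h12 (by rw [hp1eq, hp2eq, h])
      have ha24 : a2 ≠ a4 := fun h => h13 (by rw [hp1eq, hp3eq, h])
      have ha34 : a3 ≠ a4 := fun h => h23 (by rw [hp2eq, hp3eq, h])
      have hstar : N.filter (fun p => c ∈ p)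
          = ({({c, a2} : Finset (Fin v)), {c, a3}, {c, a4}} : Finset (Finset (Fin v))) := by
        rw [hNc, hp1eq, hp2eq, hp3eq]
      have hx1 : ∀ x : Fin v, x ≠ c → (N.filter (fun p => x ∈ p)).card = 1 :=
        fun x hx => hrest x (Finset.mem_univ x) hx
      have huniq : ∀ x : Fin v, x ≠ c → ∀ p, p ∈ N → x ∈ p → ∀ q, q ∈ N → x ∈ q → p = q := by
        intro x hx p hpN hxp q hqN hxq
        obtain ⟨r, hr⟩ := Finset.card_eq_one.mp (hx1 x hx)
        have h1 : p ∈ N.filter (fun p => x ∈ p) := Finset.mem_filter.mpr ⟨hpN, hxp⟩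
        have h2 : q ∈ N.filter (fun p => x ∈ p) := Finset.mem_filter.mpr ⟨hqN, hxq⟩
        rw [hr, Finset.mem_singleton] at h1 h2
        rw [h1, h2]
      refine ⟨⟨c, a2, a3, a4, _, Ne.symm ha2, Ne.symm ha3, Ne.symm ha4, ha23, ha24, ha34,
        rfl, ?_, ?_⟩, ?_⟩
      · -- star is contained in the defect graph
        rw [hDunion, hNsmall hs, ← hstar]
        exact Finset.filter_subset _ N
      · -- perfect matching on the remaining points
        rw [hDunion, hNsmall hs]
        constructor
        · intro p hp
          obtain ⟨hpN, hpstar⟩ := Finset.mem_sdiff.mp hp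
          refine ⟨hPmem p (Finset.filter_subset _ _ hpN), ?_⟩
          intro z hz
          rw [Finset.mem_sdiff]
          refine ⟨Finset.mem_univ z, fun hzS => ?_⟩
          simp only [Finset.mem_insert, Finset.mem_singleton] at hzS
          rcases hzS with rfl | rfl | rfl | rfl
          · exact hpstar (by rw [← hstar]; exact Finset.mem_filter.mpr ⟨hpN, hz⟩)
          · have h := huniq z ha2 p hpN hz p1 hp1.1 (by rw [hp1eq]; simp)
            exact hpstar (by rw [h, hp1eq]; simp)
          · have h := huniq z ha3 p hpN hz p2 hp2.1 (by rw [hp2eq]; simp)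
            exact hpstar (by rw [h, hp2eq]; simp)
          · have h := huniq z ha4 p hpN hz p3 hp3.1 (by rw [hp3eq]; simp)
            exact hpstar (by rw [h, hp3eq]; simp)
        · intro x hx
          obtain ⟨hxu, hxS⟩ := Finset.mem_sdiff.mp hx
          simp only [Finset.mem_insert, Finset.mem_singleton] at hxS
          push_neg at hxS
          obtain ⟨hxc, hxa2, hxa3, hxa4⟩ := hxS
          obtain ⟨q, hq⟩ := Finset.card_eq_one.mp (hx1 x hxc)
          have hqmem : q ∈ N.filter (fun p => x ∈ p) := hq ▸ Finset.mem_singleton_self q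
          rw [Finset.mem_filter] at hqmem
          have hqstar : q ∉ ({({c, a2} : Finset (Fin v)), {c, a3}, {c, a4}}
              : Finset (Finset (Fin v))) := by
            intro hqs
            simp only [Finset.mem_insert, Finset.mem_singleton] at hqs
            rcases hqs with rfl | rfl | rfl
            · rcases (by simpa using hqmem.2 : x = c ∨ x = a2) with h | h
              exacts [hxc h, hxa2 h]
            · rcases (by simpa using hqmem.2 : x = c ∨ x = a3) with h | h
              exacts [hxc h, hxa3 h]
            · rcases (by simpa using hqmem.2 : x = c ∨ x = a4) with h | h
              exacts [hxc h, hxa4 h]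
          refine ⟨q, ⟨Finset.mem_sdiff.mpr ⟨hqmem.1, hqstar⟩, hqmem.2⟩, ?_⟩
          rintro p' ⟨hp's, hxp'⟩
          have hp'N := (Finset.mem_sdiff.mp hp's).1
          have hmem : p' ∈ N.filter (fun p => x ∈ p) := Finset.mem_filter.mpr ⟨hp'N, hxp'⟩
          rw [hq, Finset.mem_singleton] at hmem
          exact hmem
      · -- the count of D₁
        have hz : (N.card : ℤ) = (v:ℤ)/2 + 1 := by rw [hNcardt, htv]
        omega


end DataPlacement
end

section
/- Let (v,b) satisfy condition (C1) or condition (C2). Then every nearly well-balanced triple system NWBTS(v;b) (V,𝓕) is an optimal data placement for triple replication: for every real x ≥ 1 and every multiset 𝓕′ of b 3-element subsets of V, P(𝓕,x) ≤ P(𝓕′,x). -/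
namespace DataPlacement

open Finset

variable {α : Type*} [DecidableEq α]

section Helpers

variable {β γ : Type*}

lemma sum_map_finset_sum {M : Type*} [AddCommMonoid M] (G : Multiset β) (s : Finset γ)
    (g : γ → β → M) :
    (G.map fun B => ∑ T ∈ s, g T B).sum = ∑ T ∈ s, (G.map (g T)).sum := by
  induction G using Multiset.induction_on with
  | empty => simp
  | cons a G ih => simp [ih, Finset.sum_add_distrib]

lemma sum_map_ite (G : Multiset β) (p : β → Prop) [DecidablePred p] (c : ℕ) :
    (G.map fun A => if p A then c else 0).sum = c * G.countP p := by
  induction G using Multiset.induction_on with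
  | empty => simp
  | cons a G ih =>
    by_cases h : p a <;> simp [h, ih, Nat.mul_add, Multiset.countP_cons] <;> ring

lemma cast_sum_map (M : Multiset γ) (f : γ → ℕ) :
    (((M.map f).sum : ℕ) : ℝ) = (M.map fun a => (f a : ℝ)).sum := by
  induction M using Multiset.induction_on with
  | empty => simp
  | cons a M ih => simp [ih]

lemma sum_map_mul_right' (M : Multiset γ) (f : γ → ℝ) (y : ℝ) :
    (M.map fun a => f a * y).sum = (M.map f).sum * y := by
  induction M using Multiset.induction_on with
  | empty => simp
  | cons a M ih => simp [ih, add_mul]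

lemma pair_sum {M : Type*} [AddCommMonoid M] (G : Multiset β) (f : β → β → M) :
    ((G.bind fun A => G.map fun B => (A, B)).map fun p => f p.1 p.2).sum
      = (G.map fun A => (G.map (f A)).sum).sum := by
  rw [Multiset.map_bind, Multiset.sum_bind]
  simp [Multiset.map_map, Function.comp]

end Helpers

lemma lamF_eq_countP (G : Multiset (Finset α)) (T : Finset α) :
    lamF G T = G.countP (fun B => T ⊆ B) := by
  rw [lamF, Multiset.countP_eq_card_filter]

lemma sum_lamF (s : Finset (Finset α)) (G : Multiset (Finset α)) :
    ∑ T ∈ s, lamF G T = (G.map fun A => (s.filter (· ⊆ A)).card).sum := by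
  have h : ∀ A : Finset α, (s.filter (· ⊆ A)).card = ∑ T ∈ s, if T ⊆ A then 1 else 0 := by
    intro A; rw [Finset.card_filter]
  simp only [h]
  rw [sum_map_finset_sum]
  refine Finset.sum_congr rfl fun T _ => ?_
  rw [sum_map_ite, one_mul, lamF_eq_countP]

lemma sum_lamF_sq (s : Finset (Finset α)) (G : Multiset (Finset α)) :
    ∑ T ∈ s, lamF G T * lamF G T
      = ((G.bind fun A => G.map fun B => (A, B)).map
          fun p => (s.filter fun T => T ⊆ p.1 ∧ T ⊆ p.2).card).sum := by
  rw [pair_sum G (fun A B => (s.filter fun T => T ⊆ A ∧ T ⊆ B).card)]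
  have inner : ∀ A : Finset α,
      (G.map fun B => (s.filter fun T => T ⊆ A ∧ T ⊆ B).card).sum
        = ∑ T ∈ s, if T ⊆ A then lamF G T else 0 := by
    intro A
    have h : ∀ B : Finset α, (s.filter fun T => T ⊆ A ∧ T ⊆ B).card
        = ∑ T ∈ s, if T ⊆ A ∧ T ⊆ B then 1 else 0 := by
      intro B; rw [Finset.card_filter]
    simp only [h]
    rw [sum_map_finset_sum]
    refine Finset.sum_congr rfl fun T _ => ?_
    by_cases hT : T ⊆ A
    · rw [sum_map_ite G (fun B => T ⊆ A ∧ T ⊆ B) 1, one_mul, lamF_eq_countP, if_pos hT]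
      congr 1
      ext B
      simp [hT]
    · simp [hT]
  simp only [inner]
  rw [sum_map_finset_sum]
  refine Finset.sum_congr rfl fun T _ => ?_
  rw [sum_map_ite, lamF_eq_countP]

lemma filter_powersetCard_subset (X A : Finset α) (hA : A ⊆ X) (k : ℕ) :
    (X.powersetCard k).filter (· ⊆ A) = A.powersetCard k := by
  ext T
  simp only [Finset.mem_filter, Finset.mem_powersetCard]
  exact ⟨fun h => ⟨h.2, h.1.2⟩, fun h => ⟨⟨h.1.trans hA, h.2⟩, h.1⟩⟩

lemma filter_powersetCard_subset2 (X A B : Finset α) (hA : A ⊆ X) (k : ℕ) :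
    ((X.powersetCard k).filter fun T => T ⊆ A ∧ T ⊆ B) = (A ∩ B).powersetCard k := by
  ext T
  simp only [Finset.mem_filter, Finset.mem_powersetCard, Finset.subset_inter_iff]
  constructor
  · rintro ⟨⟨-, h2⟩, h3, h4⟩; exact ⟨⟨h3, h4⟩, h2⟩
  · rintro ⟨⟨h3, h4⟩, h2⟩; exact ⟨⟨h3.trans hA, h2⟩, h3, h4⟩




lemma sum_filter_count {γ : Type*} (M : Multiset γ) (d : γ → ℕ) (hd : ∀ p ∈ M, d p < 4)
    (x : ℝ) :
    ∑ j ∈ Finset.range 4, (Multiset.card (M.filter fun p => d p = j) : ℝ) * x ^ j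
      = (M.map fun p => x ^ d p).sum := by
  induction M using Multiset.induction_on with
  | empty => simp
  | cons a M ih =>
    have ha := hd a (Multiset.mem_cons_self a M)
    have hM : ∀ p ∈ M, d p < 4 := fun p hp => hd p (Multiset.mem_cons_of_mem hp)
    simp only [Multiset.filter_cons, Multiset.map_cons, Multiset.sum_cons, Multiset.card_add]
    have hcard : ∀ j, ((Multiset.card (if d a = j then ({a} : Multiset γ) else 0)
          + Multiset.card (M.filter fun p => d p = j) : ℕ) : ℝ)
        = (if d a = j then (1:ℝ) else 0) + (Multiset.card (M.filter fun p => d p = j) : ℝ) := by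
      intro j; split <;> simp
    simp only [hcard, add_mul, Finset.sum_add_distrib]
    rw [ih hM]
    congr 1
    simp [ite_mul, Finset.sum_ite_eq, Finset.mem_range, ha]

lemma binom4 (d : ℕ) (hd : d < 4) (x : ℝ) :
    x ^ d = ∑ k ∈ Finset.range 4, (d.choose k : ℝ) * (x - 1) ^ k := by
  interval_cases d <;> (rw [Finset.sum_range_succ, Finset.sum_range_succ, Finset.sum_range_succ, Finset.sum_range_one] ; norm_num [Nat.choose] ; try ring)

lemma Pval_eq (X : Finset α) (G : Multiset (Finset α)) (hG : ∀ A ∈ G, A.card = 3 ∧ A ⊆ X)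
    (x : ℝ) :
    Pval G x = ∑ k ∈ Finset.range 4,
      ((∑ T ∈ X.powersetCard k, lamF G T * lamF G T : ℕ) : ℝ) * (x - 1) ^ k := by
  classical
  set M := G.bind fun A => G.map fun B => (A, B) with hM
  have hmem : ∀ p ∈ M, p.1.card = 3 ∧ p.1 ⊆ X ∧ p.2.card = 3 := by
    intro p hp
    rw [hM, Multiset.mem_bind] at hp; obtain ⟨A, hA, hp⟩ := hp
    rw [Multiset.mem_map] at hp; obtain ⟨B, hB, rfl⟩ := hp
    exact ⟨(hG A hA).1, (hG A hA).2, (hG B hB).1⟩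
  have hdeg : ∀ p ∈ M, (p.1 ∩ p.2).card < 4 := by
    intro p hp
    have h1 := Finset.card_le_card (Finset.inter_subset_left (s₁ := p.1) (s₂ := p.2))
    have h2 := (hmem p hp).1
    omega
  have step1 : Pval G x = (M.map fun p => x ^ (p.1 ∩ p.2).card).sum := by
    rw [Pval]
    exact sum_filter_count M (fun p => (p.1 ∩ p.2).card) hdeg x
  rw [step1]
  have step2 : (M.map fun p => x ^ (p.1 ∩ p.2).card).sum
      = (M.map fun p => ∑ k ∈ Finset.range 4,
          (((p.1 ∩ p.2).card.choose k : ℝ)) * (x - 1) ^ k).sum := by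
    congr 1; exact Multiset.map_congr rfl fun p hp => binom4 _ (hdeg p hp) x
  rw [step2, sum_map_finset_sum]
  refine Finset.sum_congr rfl fun k _ => ?_
  rw [sum_lamF_sq (X.powersetCard k) G]
  rw [cast_sum_map, ← sum_map_mul_right']
  congr 1
  apply Multiset.map_congr rfl
  intro p hp
  have h1 : ((X.powersetCard k).filter fun T => T ⊆ p.1 ∧ T ⊆ p.2)
      = (p.1 ∩ p.2).powersetCard k :=
    filter_powersetCard_subset2 X p.1 p.2 (hmem p hp).2.1 k
  rw [h1, Finset.card_powersetCard]

lemma sum_lamF_powersetCard (X : Finset α) (G : Multiset (Finset α))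
    (hG : ∀ A ∈ G, A.card = 3 ∧ A ⊆ X) (k : ℕ) :
    ∑ T ∈ X.powersetCard k, lamF G T = Nat.choose 3 k * Multiset.card G := by
  rw [sum_lamF]
  have h : ∀ A ∈ G, ((X.powersetCard k).filter (· ⊆ A)).card = Nat.choose 3 k := by
    intro A hA
    rw [filter_powersetCard_subset X A (hG A hA).2, Finset.card_powersetCard, (hG A hA).1]
  calc (G.map fun A => ((X.powersetCard k).filter (· ⊆ A)).card).sum
      = (G.map fun _ => Nat.choose 3 k).sum := congrArg _ (Multiset.map_congr rfl h)
    _ = Nat.choose 3 k * Multiset.card G := by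
        simp [Multiset.map_const', mul_comm]

lemma two_value_min {ι : Type*} (s : Finset ι) (f g : ι → ℤ) (m : ℤ)
    (hf : ∀ i ∈ s, f i = m ∨ f i = m + 1) (hsum : ∑ i ∈ s, f i = ∑ i ∈ s, g i) :
    ∑ i ∈ s, f i ^ 2 ≤ ∑ i ∈ s, g i ^ 2 := by
  have key : ∀ a : ℤ, (2*m+1) * a - m*(m+1) ≤ a ^ 2 := by
    intro a
    have h : 0 ≤ (a - m) * (a - (m+1)) := by
      rcases le_or_gt a m with h | h
      · have h2 := mul_nonneg (show (0:ℤ) ≤ m - a by linarith) (show (0:ℤ) ≤ m + 1 - a by linarith)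
        nlinarith [h2]
      · exact mul_nonneg (by linarith) (by linarith)
    nlinarith [h]
  have hf2 : ∀ i ∈ s, f i ^ 2 = (2*m+1) * f i - m*(m+1) := by
    intro i hi; rcases hf i hi with h | h <;> rw [h] <;> ring
  calc ∑ i ∈ s, f i ^ 2 = ∑ i ∈ s, ((2*m+1) * f i - m*(m+1)) := Finset.sum_congr rfl hf2
    _ = (2*m+1) * (∑ i ∈ s, f i) - s.card * (m*(m+1)) := by
        rw [Finset.sum_sub_distrib, ← Finset.mul_sum, Finset.sum_const, nsmul_eq_mul]
    _ = (2*m+1) * (∑ i ∈ s, g i) - s.card * (m*(m+1)) := by rw [hsum]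
    _ = ∑ i ∈ s, ((2*m+1) * g i - m*(m+1)) := by
        rw [Finset.sum_sub_distrib, ← Finset.mul_sum, Finset.sum_const, nsmul_eq_mul]
    _ ≤ ∑ i ∈ s, g i ^ 2 := Finset.sum_le_sum fun i _ => key (g i)

lemma handshake (X : Finset α) (S : Finset (Finset α)) (hS : ∀ P ∈ S, P.card = 2 ∧ P ⊆ X) :
    ∑ p ∈ X, (S.filter fun P => p ∈ P).card = 2 * S.card := by
  have h1 : ∀ p, (S.filter fun P => p ∈ P).card = ∑ P ∈ S, if p ∈ P then 1 else 0 := by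
    intro p; rw [Finset.card_filter]
  simp only [h1]
  rw [Finset.sum_comm]
  have h2 : ∀ P ∈ S, ∑ p ∈ X, (if p ∈ P then 1 else 0) = 2 := by
    intro P hP
    rw [← Finset.card_filter]
    have h3 : X.filter (fun p => p ∈ P) = P := by
      ext q
      simp only [Finset.mem_filter]
      exact ⟨fun h => h.2, fun h => ⟨(hS P hP).2 h, h⟩⟩
    rw [h3, (hS P hP).1]
  rw [Finset.sum_congr rfl h2, Finset.sum_const, smul_eq_mul, mul_comm]

lemma parity_aux {ι : Type*} (s : Finset ι) (d : ι → ℤ) :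
    2 ∣ ((∑ i ∈ s, d i) - ((s.filter fun i => ¬ 2 ∣ d i).card : ℤ)) := by
  classical
  induction s using Finset.induction_on with
  | empty => simp
  | @insert a s ha ih =>
    rw [Finset.sum_insert ha, Finset.filter_insert]
    by_cases h : ¬ 2 ∣ d a
    · rw [if_pos h]
      rw [Finset.card_insert_of_notMem (fun hc => ha (Finset.mem_filter.mp hc).1)]
      push_cast
      omega
    · rw [if_neg h]
      rw [not_not] at h
      omega

lemma sq_parity {ι : Type*} (s : Finset ι) (d : ι → ℤ) :
    2 ∣ (∑ i ∈ s, (d i) ^ 2 - ∑ i ∈ s, d i) := by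
  rw [← Finset.sum_sub_distrib]
  apply Finset.dvd_sum
  intro i _
  have h : (d i) ^ 2 - d i = (d i - 1) * (d i - 1 + 1) := by ring
  rw [h]
  exact (Int.even_mul_succ_self (d i - 1)).two_dvd

lemma sum_sq_ge_odd_card {ι : Type*} [DecidableEq ι] (s : Finset ι) (d : ι → ℤ) :
    ((s.filter fun i => ¬ 2 ∣ d i).card : ℤ) ≤ ∑ i ∈ s, (d i) ^ 2 := by
  classical
  calc ((s.filter fun i => ¬ 2 ∣ d i).card : ℤ)
      = ∑ _i ∈ s.filter fun i => ¬ 2 ∣ d i, (1 : ℤ) := by simp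
    _ ≤ ∑ i ∈ s.filter fun i => ¬ 2 ∣ d i, (d i) ^ 2 := by
        apply Finset.sum_le_sum
        intro i hi
        have hodd : ¬ 2 ∣ d i := (Finset.mem_filter.mp hi).2
        have hne : d i ≠ 0 := fun h0 => hodd (by rw [h0]; exact dvd_zero 2)
        have h1 : 1 ≤ |d i| := Int.one_le_abs hne
        nlinarith [sq_abs (d i), abs_nonneg (d i)]
    _ ≤ ∑ i ∈ s, (d i) ^ 2 := Finset.sum_le_sum_of_subset_of_nonneg
        (Finset.filter_subset _ _) (fun i _ _ => sq_nonneg _)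

lemma even_degree_card_ge_three (X : Finset α) (O : Finset (Finset α))
    (hO : ∀ P ∈ O, P.card = 2 ∧ P ⊆ X)
    (hdeg : ∀ p ∈ X, 2 ∣ (O.filter fun P => p ∈ P).card)
    (hne : O.Nonempty) : 3 ≤ O.card := by
  obtain ⟨P, hP⟩ := hne
  obtain ⟨a, b, hab, hPab⟩ := Finset.card_eq_two.mp (hO P hP).1
  subst hPab
  have haX : a ∈ X := (hO _ hP).2 (by simp)
  have hbX : b ∈ X := (hO _ hP).2 (by simp)
  have hda : 1 < (O.filter fun P => a ∈ P).card := by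
    have h1 : 0 < (O.filter fun P => a ∈ P).card :=
      Finset.card_pos.mpr ⟨{a, b}, Finset.mem_filter.mpr ⟨hP, by simp⟩⟩
    have h2 := hdeg a haX
    omega
  have hdb : 1 < (O.filter fun P => b ∈ P).card := by
    have h1 : 0 < (O.filter fun P => b ∈ P).card :=
      Finset.card_pos.mpr ⟨{a, b}, Finset.mem_filter.mpr ⟨hP, by simp⟩⟩
    have h2 := hdeg b hbX
    omega
  obtain ⟨P2, hP2, hP2ne⟩ := Finset.exists_mem_ne hda {a, b}
  obtain ⟨P3, hP3, hP3ne⟩ := Finset.exists_mem_ne hdb {a, b}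
  rw [Finset.mem_filter] at hP2 hP3
  have hP23 : P2 ≠ P3 := by
    rintro rfl
    apply hP2ne
    have hsub2 : ({a, b} : Finset α) ⊆ P2 := by
      intro x hx
      rcases Finset.mem_insert.mp hx with rfl | hx
      · exact hP2.2
      · rw [Finset.mem_singleton] at hx; subst hx; exact hP3.2
    have hcard2 : ({a, b} : Finset α).card = 2 := by
      rw [Finset.card_insert_of_notMem (by simp [hab]), Finset.card_singleton]
    exact (Finset.eq_of_subset_of_card_le hsub2 (by rw [(hO P2 hP2.1).1, hcard2])).symm
  have hsub : ({({a, b} : Finset α), P2, P3} : Finset (Finset α)) ⊆ O := by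
    intro Q hQ
    rcases Finset.mem_insert.mp hQ with rfl | hQ
    · exact hP
    rcases Finset.mem_insert.mp hQ with rfl | hQ
    · exact hP2.1
    · rw [Finset.mem_singleton] at hQ; subst hQ; exact hP3.1
  have hcard : ({({a, b} : Finset α), P2, P3} : Finset (Finset α)).card = 3 := by
    rw [Finset.card_insert_of_notMem (by simp [Ne.symm hP2ne, Ne.symm hP3ne]),
      Finset.card_insert_of_notMem (by simp [hP23]), Finset.card_singleton]
  calc 3 = ({({a, b} : Finset α), P2, P3} : Finset (Finset α)).card := hcard.symm
    _ ≤ O.card := Finset.card_le_card hsub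



lemma two_mul_choose_two (v : ℕ) : 2 * v.choose 2 = v * (v - 1) := by
  cases v with
  | zero => simp
  | succ n =>
    rw [Nat.choose_two_right, Nat.succ_sub_one]
    have he : Even ((n + 1) * n) := by simpa [mul_comm] using Nat.even_mul_succ_self n
    rw [mul_comm]
    exact Nat.div_mul_cancel he.two_dvd

lemma card_pairs_at (X : Finset α) (p : α) (hp : p ∈ X) :
    ((X.powersetCard 2).filter fun P => p ∈ P).card = X.card - 1 := by
  have himg : ((X.powersetCard 2).filter fun P => p ∈ P)
      = (X.erase p).image (fun q => ({p, q} : Finset α)) := by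
    ext P
    simp only [Finset.mem_filter, Finset.mem_powersetCard, Finset.mem_image,
      Finset.mem_erase]
    constructor
    · rintro ⟨⟨hPX, hP2⟩, hpP⟩
      obtain ⟨x, y, hxy, rfl⟩ := Finset.card_eq_two.mp hP2
      rcases Finset.mem_insert.mp hpP with rfl | hy
      · exact ⟨y, ⟨hxy.symm, hPX (by simp)⟩, rfl⟩
      · rw [Finset.mem_singleton] at hy; subst hy
        exact ⟨x, ⟨hxy, hPX (by simp)⟩, by rw [Finset.pair_comm]⟩
    · rintro ⟨q, ⟨hqp, hqX⟩, rfl⟩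
      refine ⟨⟨?_, ?_⟩, by simp⟩
      · intro z hz
        rcases Finset.mem_insert.mp hz with rfl | hz
        · exact hp
        · rw [Finset.mem_singleton] at hz; subst hz; exact hqX
      · rw [Finset.card_insert_of_notMem (by simp [Ne.symm hqp]), Finset.card_singleton]
  rw [himg, Finset.card_image_of_injOn, Finset.card_erase_of_mem hp]
  intro q hq q' hq' h
  simp only at h
  have : q ∈ ({p, q'} : Finset α) := by
    rw [← h]; simp
  rcases Finset.mem_insert.mp this with h2 | hz
  · exfalso
    have hq2 : q ∈ X ∧ ¬ q = p := by simpa using hq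
    exact hq2.2 h2
  · exact Finset.mem_singleton.mp hz

lemma pair_filter_subset_eval (A : Finset α) (hA3 : A.card = 3) (X : Finset α)
    (hAX : A ⊆ X) (p : α) :
    (((X.powersetCard 2).filter fun P => p ∈ P).filter (· ⊆ A)).card
      = if p ∈ A then 2 else 0 := by
  have h1 : ((X.powersetCard 2).filter fun P => p ∈ P).filter (· ⊆ A)
      = (A.powersetCard 2).filter fun P => p ∈ P := by
    ext P
    simp only [Finset.mem_filter, Finset.mem_powersetCard]
    constructor
    · rintro ⟨⟨⟨hPX, h2⟩, hpP⟩, hPA⟩; exact ⟨⟨hPA, h2⟩, hpP⟩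
    · rintro ⟨⟨hPA, h2⟩, hpP⟩; exact ⟨⟨⟨hPA.trans hAX, h2⟩, hpP⟩, hPA⟩
  rw [h1]
  by_cases hp : p ∈ A
  · rw [if_pos hp]
    have h2 : (A.powersetCard 2).filter (fun P => ¬ p ∈ P) = (A.erase p).powersetCard 2 := by
      ext P
      simp only [Finset.mem_filter, Finset.mem_powersetCard, Finset.subset_erase]
      tauto
    have h3 := Finset.card_filter_add_card_filter_not
      (s := A.powersetCard 2) (p := fun P => p ∈ P)
    rw [h2] at h3
    rw [Finset.card_powersetCard, Finset.card_powersetCard, hA3,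
      Finset.card_erase_of_mem hp, hA3] at h3
    norm_num at h3
    omega
  · rw [if_neg hp, Finset.card_eq_zero]
    apply Finset.eq_empty_of_forall_notMem
    intro P hP
    rw [Finset.mem_filter] at hP
    exact hp ((Finset.mem_powersetCard.mp hP.1).1 hP.2)

lemma point_degree (X : Finset α) (G : Multiset (Finset α))
    (hG : ∀ A ∈ G, A.card = 3 ∧ A ⊆ X) (p : α) :
    ∑ P ∈ (X.powersetCard 2).filter (fun P => p ∈ P), lamF G P = 2 * lamF G {p} := by
  rw [sum_lamF]
  have h : ((G.map fun A => ((((X.powersetCard 2).filter fun P => p ∈ P)).filter (· ⊆ A)).card))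
      = G.map fun A => if ({p} : Finset α) ⊆ A then 2 else 0 := by
    apply Multiset.map_congr rfl
    intro A hA
    rw [pair_filter_subset_eval A (hG A hA).1 X (hG A hA).2 p]
    simp [Finset.singleton_subset_iff]
  rw [h, sum_map_ite, lamF_eq_countP]

lemma sum_dev_filter (X : Finset α) (F : Multiset (Finset α)) (l : ℕ)
    (hrange : PairRangeOn X F l) (s : Finset (Finset α)) (hs : s ⊆ X.powersetCard 2) :
    ∑ P ∈ s, ((lamF F P : ℤ) - l)
      = ((s ∩ Dlev X F l 1).card : ℤ) - ((s ∩ Dlev X F l (-1)).card : ℤ) := by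
  classical
  have hterm : ∀ P ∈ s, ((lamF F P : ℤ) - l)
      = (if P ∈ Dlev X F l 1 then (1:ℤ) else 0)
        - (if P ∈ Dlev X F l (-1) then (1:ℤ) else 0) := by
    intro P hP
    have hr := hrange P (hs hP)
    have hm1 : (P ∈ Dlev X F l 1) ↔ (lamF F P : ℤ) = (l:ℤ) + 1 := by
      simp [Dlev, hs hP]
    have hm2 : (P ∈ Dlev X F l (-1)) ↔ (lamF F P : ℤ) = (l:ℤ) + (-1) := by
      simp [Dlev, hs hP]
    by_cases h1 : (lamF F P : ℤ) = (l:ℤ) + 1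
    · rw [if_pos (hm1.mpr h1), if_neg (fun hc => by have := hm2.mp hc; omega), h1]; ring
    · by_cases h2 : (lamF F P : ℤ) = (l:ℤ) + (-1)
      · rw [if_neg (fun hc => h1 (hm1.mp hc)), if_pos (hm2.mpr h2), h2]; ring
      · rw [if_neg (fun hc => h1 (hm1.mp hc)), if_neg (fun hc => h2 (hm2.mp hc))]
        have hx : (lamF F P : ℤ) = l := by omega
        rw [hx]; ring
  rw [Finset.sum_congr rfl hterm, Finset.sum_sub_distrib, Finset.sum_boole, Finset.sum_boole]
  rw [Finset.filter_mem_eq_inter, Finset.filter_mem_eq_inter]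

lemma sum_dev_sq_filter (X : Finset α) (F : Multiset (Finset α)) (l : ℕ)
    (hrange : PairRangeOn X F l) (s : Finset (Finset α)) (hs : s ⊆ X.powersetCard 2) :
    ∑ P ∈ s, ((lamF F P : ℤ) - l) ^ 2
      = ((s ∩ Dlev X F l 1).card : ℤ) + ((s ∩ Dlev X F l (-1)).card : ℤ) := by
  classical
  have hterm : ∀ P ∈ s, ((lamF F P : ℤ) - l) ^ 2
      = (if P ∈ Dlev X F l 1 then (1:ℤ) else 0)
        + (if P ∈ Dlev X F l (-1) then (1:ℤ) else 0) := by
    intro P hP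
    have hr := hrange P (hs hP)
    have hm1 : (P ∈ Dlev X F l 1) ↔ (lamF F P : ℤ) = (l:ℤ) + 1 := by
      simp [Dlev, hs hP]
    have hm2 : (P ∈ Dlev X F l (-1)) ↔ (lamF F P : ℤ) = (l:ℤ) + (-1) := by
      simp [Dlev, hs hP]
    by_cases h1 : (lamF F P : ℤ) = (l:ℤ) + 1
    · rw [if_pos (hm1.mpr h1), if_neg (fun hc => by have := hm2.mp hc; omega), h1]; ring
    · by_cases h2 : (lamF F P : ℤ) = (l:ℤ) + (-1)
      · rw [if_neg (fun hc => h1 (hm1.mp hc)), if_pos (hm2.mpr h2), h2]; ring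
      · rw [if_neg (fun hc => h1 (hm1.mp hc)), if_neg (fun hc => h2 (hm2.mp hc))]
        have hx : (lamF F P : ℤ) = l := by omega
        rw [hx]; ring
  rw [Finset.sum_congr rfl hterm, Finset.sum_add_distrib, Finset.sum_boole, Finset.sum_boole]
  rw [Finset.filter_mem_eq_inter, Finset.filter_mem_eq_inter]

lemma lamF_empty (G : Multiset (Finset α)) : lamF G ∅ = Multiset.card G := by
  rw [lamF]
  congr 1
  apply Multiset.filter_eq_self.mpr
  intro A _
  exact Finset.empty_subset A

lemma lamF_eq_count (G : Multiset (Finset α)) (hG : ∀ A ∈ G, A.card = 3) (T : Finset α)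
    (hT : T.card = 3) : lamF G T = G.count T := by
  rw [lamF, Multiset.count_eq_card_filter_eq]
  congr 1
  apply Multiset.filter_congr
  intro A hA
  constructor
  · intro hsub
    exact (Finset.eq_of_subset_of_card_le hsub (by rw [hT, hG A hA]))
  · intro h; exact h.le

lemma matching_deg (X : Finset α) (E : Finset (Finset α))
    (hpm : (∀ p ∈ E, p.card = 2 ∧ p ⊆ X) ∧ ∀ x ∈ X, ∃! p, p ∈ E ∧ x ∈ p)
    (p : α) (hp : p ∈ X) : (E.filter fun P => p ∈ P).card = 1 := by
  obtain ⟨P, ⟨hPE, hpP⟩, huniq⟩ := hpm.2 p hp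
  rw [Finset.card_eq_one]
  refine ⟨P, ?_⟩
  ext Q
  simp only [Finset.mem_filter, Finset.mem_singleton]
  constructor
  · intro ⟨h1, h2⟩; exact huniq Q ⟨h1, h2⟩
  · rintro rfl; exact ⟨hPE, hpP⟩

lemma pair_ne_left {x b c d : α} (hc : x ≠ c) (hd : x ≠ d) :
    ({x, b} : Finset α) ≠ {c, d} := by
  intro h
  have hx : x ∈ ({c, d} : Finset α) := by rw [← h]; simp
  rcases Finset.mem_insert.mp hx with h1 | h1
  · exact hc h1
  · exact hd (Finset.mem_singleton.mp h1)

lemma pair_ne_right {a x c d : α} (hc : x ≠ c) (hd : x ≠ d) :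
    ({a, x} : Finset α) ≠ {c, d} := by
  intro h
  have hx : x ∈ ({c, d} : Finset α) := by rw [← h]; simp
  rcases Finset.mem_insert.mp hx with h1 | h1
  · exact hc h1
  · exact hd (Finset.mem_singleton.mp h1)

lemma degE_triangle (x y z p : α) (hxy : x ≠ y) (hxz : x ≠ z) (hyz : y ≠ z) :
    ((({({x, y} : Finset α), {y, z}, {x, z}} : Finset (Finset α)).filter
      fun P => p ∈ P).card = 0)
    ∨ ((({({x, y} : Finset α), {y, z}, {x, z}} : Finset (Finset α)).filter
      fun P => p ∈ P).card = 2) := by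
  have h12 : ({x, y} : Finset α) ≠ {y, z} := pair_ne_left hxy hxz
  have h13 : ({x, y} : Finset α) ≠ {x, z} := pair_ne_right (Ne.symm hxy) hyz
  have h23 : ({y, z} : Finset α) ≠ {x, z} := pair_ne_left (Ne.symm hxy) hyz
  rw [Finset.card_filter]
  rw [Finset.sum_insert (by simp [h12, h13]), Finset.sum_insert (by simp [h23]),
    Finset.sum_singleton]
  by_cases hpx : p = x <;> by_cases hpy : p = y <;> by_cases hpz : p = z <;>
    simp_all [Finset.mem_insert, Finset.mem_singleton]

lemma degE_fourcycle (x y z w p : α) (hxy : x ≠ y) (hxz : x ≠ z) (hxw : x ≠ w)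
    (hyz : y ≠ z) (hyw : y ≠ w) (hzw : z ≠ w) :
    ((({({x, y} : Finset α), {y, z}, {z, w}, {x, w}} : Finset (Finset α)).filter
      fun P => p ∈ P).card = 0)
    ∨ ((({({x, y} : Finset α), {y, z}, {z, w}, {x, w}} : Finset (Finset α)).filter
      fun P => p ∈ P).card = 2) := by
  have h12 : ({x, y} : Finset α) ≠ {y, z} := pair_ne_left hxy hxz
  have h13 : ({x, y} : Finset α) ≠ {z, w} := pair_ne_left hxz hxw
  have h14 : ({x, y} : Finset α) ≠ {x, w} := pair_ne_right (Ne.symm hxy) hyw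
  have h23 : ({y, z} : Finset α) ≠ {z, w} := pair_ne_left hyz hyw
  have h24 : ({y, z} : Finset α) ≠ {x, w} := pair_ne_left (Ne.symm hxy) hyw
  have h34 : ({z, w} : Finset α) ≠ {x, w} := pair_ne_left (Ne.symm hxz) hzw
  rw [Finset.card_filter]
  rw [Finset.sum_insert (by simp [h12, h13, h14]), Finset.sum_insert (by simp [h23, h24]),
    Finset.sum_insert (by simp [h34]), Finset.sum_singleton]
  by_cases hpx : p = x <;> by_cases hpy : p = y <;> by_cases hpz : p = z <;>
    by_cases hpw : p = w <;>
    simp_all [Finset.mem_insert, Finset.mem_singleton]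

lemma deg_union_eq (D1 Dm : Finset (Finset α)) (hdisj : Disjoint D1 Dm) (p : α) :
    ((D1 ∪ Dm).filter fun P => p ∈ P).card
      = (D1.filter fun P => p ∈ P).card + (Dm.filter fun P => p ∈ P).card := by
  rw [Finset.filter_union, Finset.card_union_of_disjoint (Finset.disjoint_filter_filter hdisj)]

lemma deg_split (S T : Finset (Finset α)) (q : Finset α → Prop) [DecidablePred q] :
    (S.filter q).card = ((S \ T).filter q).card + ((S ∩ T).filter q).card := by
  conv_lhs => rw [← Finset.sdiff_union_inter S T]
  rw [Finset.filter_union,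
    Finset.card_union_of_disjoint (Finset.disjoint_filter_filter (Finset.disjoint_sdiff_inter S T))]

lemma delta_C1 (D1 Dm : Finset (Finset α)) (hdisj : Disjoint D1 Dm)
    (hdeg : ∀ p : α, ((D1 ∪ Dm).filter fun P => p ∈ P).card = 0
      ∨ ((D1 ∪ Dm).filter fun P => p ∈ P).card = 2)
    (hDm : Dm.card = 1) (p : α) :
    ((D1.filter fun P => p ∈ P).card : ℤ) - ((Dm.filter fun P => p ∈ P).card : ℤ) = 0 ∨
    ((D1.filter fun P => p ∈ P).card : ℤ) - ((Dm.filter fun P => p ∈ P).card : ℤ) = 2 := by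
  have h1 := deg_union_eq D1 Dm hdisj p
  have h2 : (Dm.filter fun P => p ∈ P).card ≤ 1 := hDm ▸ Finset.card_filter_le Dm _
  rcases hdeg p with h | h <;> omega

lemma delta_C1' (D1 Dm : Finset (Finset α)) (hdisj : Disjoint D1 Dm)
    (hdeg : ∀ p : α, ((D1 ∪ Dm).filter fun P => p ∈ P).card = 0
      ∨ ((D1 ∪ Dm).filter fun P => p ∈ P).card = 2)
    (hD1 : D1.card = 1) (p : α) :
    ((D1.filter fun P => p ∈ P).card : ℤ) - ((Dm.filter fun P => p ∈ P).card : ℤ) = -2 ∨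
    ((D1.filter fun P => p ∈ P).card : ℤ) - ((Dm.filter fun P => p ∈ P).card : ℤ) = 0 := by
  have h1 := deg_union_eq D1 Dm hdisj p
  have h2 : (D1.filter fun P => p ∈ P).card ≤ 1 := hD1 ▸ Finset.card_filter_le D1 _
  rcases hdeg p with h | h <;> omega

lemma deg_star_eval (c a2 a3 a4 p : α) (hc2 : c ≠ a2) (hc3 : c ≠ a3) (hc4 : c ≠ a4)
    (h23 : a2 ≠ a3) (h24 : a2 ≠ a4) (h34 : a3 ≠ a4) :
    (((({({c, a2} : Finset α), {c, a3}, {c, a4}}) : Finset (Finset α)).filter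
        fun P => p ∈ P).card)
      = if p = c then 3 else if p = a2 ∨ p = a3 ∨ p = a4 then 1 else 0 := by
  have h12 : ({c, a2} : Finset α) ≠ {c, a3} := pair_ne_right (Ne.symm hc2) h23
  have h13 : ({c, a2} : Finset α) ≠ {c, a4} := pair_ne_right (Ne.symm hc2) h24
  have h23' : ({c, a3} : Finset α) ≠ {c, a4} := pair_ne_right (Ne.symm hc3) h34
  rw [Finset.card_filter]
  rw [Finset.sum_insert (by simp [h12, h13]), Finset.sum_insert (by simp [h23']),
    Finset.sum_singleton]
  by_cases hpc : p = c <;> by_cases hp2 : p = a2 <;> by_cases hp3 : p = a3 <;>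
    by_cases hp4 : p = a4 <;>
    simp_all [Finset.mem_insert, Finset.mem_singleton]

set_option maxHeartbeats 1000000 in
lemma delta_star (X : Finset α) (D1 Dm : Finset (Finset α)) (hdisj : Disjoint D1 Dm)
    (c a2 a3 a4 : α) (hc2 : c ≠ a2) (hc3 : c ≠ a3) (hc4 : c ≠ a4)
    (h23 : a2 ≠ a3) (h24 : a2 ≠ a4) (h34 : a3 ≠ a4)
    (hsub : ({({c, a2} : Finset α), {c, a3}, {c, a4}} : Finset (Finset α)) ⊆ D1 ∪ Dm)
    (hpm1 : ∀ P ∈ (D1 ∪ Dm) \ ({({c, a2} : Finset α), {c, a3}, {c, a4}} : Finset (Finset α)),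
        P.card = 2 ∧ P ⊆ X \ ({c, a2, a3, a4} : Finset α))
    (hpm2 : ∀ x ∈ X \ ({c, a2, a3, a4} : Finset α), ∃! P,
        P ∈ (D1 ∪ Dm) \ ({({c, a2} : Finset α), {c, a3}, {c, a4}} : Finset (Finset α)) ∧ x ∈ P)
    (hsplit :
      ((({({c, a2} : Finset α), {c, a3}, {c, a4}} : Finset (Finset α)) ∩ D1).card = 2 ∧
        (({({c, a2} : Finset α), {c, a3}, {c, a4}} : Finset (Finset α)) ∩ Dm).card = 1) ∨
      ((({({c, a2} : Finset α), {c, a3}, {c, a4}} : Finset (Finset α)) ∩ D1).card = 1 ∧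
        (({({c, a2} : Finset α), {c, a3}, {c, a4}} : Finset (Finset α)) ∩ Dm).card = 2))
    (p : α) (hp : p ∈ X) :
    ((D1.filter fun P => p ∈ P).card : ℤ) - ((Dm.filter fun P => p ∈ P).card : ℤ) = -1 ∨
    ((D1.filter fun P => p ∈ P).card : ℤ) - ((Dm.filter fun P => p ∈ P).card : ℤ) = 1 := by
  classical
  set star : Finset (Finset α) := {({c, a2} : Finset α), {c, a3}, {c, a4}} with hstar
  have hmemc : ∀ P ∈ star, c ∈ P := by
    intro P hP
    rw [hstar] at hP
    rcases Finset.mem_insert.mp hP with rfl | hP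
    · simp
    rcases Finset.mem_insert.mp hP with rfl | hP
    · simp
    · rw [Finset.mem_singleton] at hP; subst hP; simp
  have hD1split := deg_split D1 star (fun P => p ∈ P)
  have hDmsplit := deg_split Dm star (fun P => p ∈ P)
  have hIC1 : D1 ∩ star = star ∩ D1 := Finset.inter_comm _ _
  have hICm : Dm ∩ star = star ∩ Dm := Finset.inter_comm _ _
  rw [hIC1] at hD1split
  rw [hICm] at hDmsplit
  by_cases hp4 : p ∈ ({c, a2, a3, a4} : Finset α)
  · -- p is one of the star points
    have hzero : ∀ S : Finset (Finset α), S ⊆ D1 ∪ Dm →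
        ((S \ star).filter fun P => p ∈ P).card = 0 := by
      intro S hS
      rw [Finset.card_eq_zero]
      apply Finset.eq_empty_of_forall_notMem
      intro P hP
      rw [Finset.mem_filter, Finset.mem_sdiff] at hP
      have hP' : P ∈ (D1 ∪ Dm) \ star := Finset.mem_sdiff.mpr ⟨hS hP.1.1, hP.1.2⟩
      have hPX := (hpm1 P hP').2 hP.2
      exact (Finset.mem_sdiff.mp hPX).2 hp4
    rw [hzero D1 Finset.subset_union_left] at hD1split
    rw [hzero Dm Finset.subset_union_right] at hDmsplit
    have hstarsplit : (star.filter fun P => p ∈ P).card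
        = ((star ∩ D1).filter fun P => p ∈ P).card
          + ((star ∩ Dm).filter fun P => p ∈ P).card := by
      have he : star = (star ∩ D1) ∪ (star ∩ Dm) := by
        rw [← Finset.inter_union_distrib_left]
        exact (Finset.inter_eq_left.mpr hsub).symm
      conv_lhs => rw [he]
      rw [Finset.filter_union, Finset.card_union_of_disjoint
        (Finset.disjoint_filter_filter
          (hdisj.mono Finset.inter_subset_right Finset.inter_subset_right))]
    have hdeval := deg_star_eval c a2 a3 a4 p hc2 hc3 hc4 h23 h24 h34
    rw [← hstar] at hdeval
    by_cases hpc : p = c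
    · -- degree 3, and star∩D1 / star∩Dm all contain c
      have hf1 : ((star ∩ D1).filter fun P => p ∈ P).card = (star ∩ D1).card := by
        rw [Finset.filter_true_of_mem]
        intro P hP
        subst hpc
        exact hmemc P (Finset.mem_of_mem_inter_left hP)
      have hf2 : ((star ∩ Dm).filter fun P => p ∈ P).card = (star ∩ Dm).card := by
        rw [Finset.filter_true_of_mem]
        intro P hP
        subst hpc
        exact hmemc P (Finset.mem_of_mem_inter_left hP)
      rcases hsplit with ⟨hA, hB⟩ | ⟨hA, hB⟩ <;> rw [hf1, hA] at hD1split <;>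
        rw [hf2, hB] at hDmsplit <;> omega
    · -- p = a_i : star degree 1
      have hpa : p = a2 ∨ p = a3 ∨ p = a4 := by
        rcases Finset.mem_insert.mp hp4 with h | h
        · exact absurd h hpc
        rcases Finset.mem_insert.mp h with h | h
        · exact Or.inl h
        rcases Finset.mem_insert.mp h with h | h
        · exact Or.inr (Or.inl h)
        · exact Or.inr (Or.inr (Finset.mem_singleton.mp h))
      rw [if_neg hpc, if_pos hpa] at hdeval
      rw [hstarsplit] at hdeval
      omega
  · -- p outside the star points : matching point
    have hs0 : (star.filter fun P => p ∈ P).card = 0 := by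
      have hdeval := deg_star_eval c a2 a3 a4 p hc2 hc3 hc4 h23 h24 h34
      rw [← hstar] at hdeval
      have h1 : ¬ p = c := fun h => hp4 (by rw [h]; simp)
      have h2 : ¬ (p = a2 ∨ p = a3 ∨ p = a4) := by
        rintro (h | h | h) <;> exact hp4 (by rw [h]; simp)
      rw [if_neg h1, if_neg h2] at hdeval
      exact hdeval
    have hi1 : ((star ∩ D1).filter fun P => p ∈ P).card = 0 := by
      have hle := Finset.card_le_card (Finset.filter_subset_filter (fun P => p ∈ P)
        (Finset.inter_subset_left (s₁ := star) (s₂ := D1)))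
      omega
    have hi2 : ((star ∩ Dm).filter fun P => p ∈ P).card = 0 := by
      have hle := Finset.card_le_card (Finset.filter_subset_filter (fun P => p ∈ P)
        (Finset.inter_subset_left (s₁ := star) (s₂ := Dm)))
      omega
    have hmd : (((D1 ∪ Dm) \ star).filter fun P => p ∈ P).card = 1 := by
      apply matching_deg (X \ ({c, a2, a3, a4} : Finset α)) _ ⟨hpm1, hpm2⟩
      exact Finset.mem_sdiff.mpr ⟨hp, hp4⟩
    have hsd : ((D1 ∪ Dm) \ star) = (D1 \ star) ∪ (Dm \ star) := by
      ext Q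
      simp only [Finset.mem_sdiff, Finset.mem_union]
      tauto
    rw [hsd, Finset.filter_union, Finset.card_union_of_disjoint
      (Finset.disjoint_filter_filter
        (hdisj.mono Finset.sdiff_subset Finset.sdiff_subset))] at hmd
    omega



lemma Dlev_subset' (X : Finset α) (G : Multiset (Finset α)) (l : ℕ) (i : ℤ) :
    Dlev X G l i ⊆ X.powersetCard 2 := Finset.filter_subset _ _

lemma atP_inter (X : Finset α) (p : α) (S : Finset (Finset α)) (hS : S ⊆ X.powersetCard 2) :
    ((X.powersetCard 2).filter fun P => p ∈ P) ∩ S = S.filter fun P => p ∈ P := by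
  ext P
  simp only [Finset.mem_inter, Finset.mem_filter]
  constructor
  · rintro ⟨⟨h1, h2⟩, h3⟩; exact ⟨h3, h2⟩
  · rintro ⟨h1, h2⟩; exact ⟨⟨hS h1, h2⟩, h1⟩

lemma sum_dev_atP (X : Finset α) (G : Multiset (Finset α))
    (hG : ∀ A ∈ G, A.card = 3 ∧ A ⊆ X) (l : ℕ) (p : α) (hp : p ∈ X) :
    ∑ P ∈ (X.powersetCard 2).filter (fun P => p ∈ P), ((lamF G P : ℤ) - l)
      = 2 * (lamF G {p} : ℤ) - ((X.card : ℤ) - 1) * l := by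
  have h2 := point_degree X G hG p
  have h3 := card_pairs_at X p hp
  have hc1 : 1 ≤ X.card := Finset.one_le_card.mpr ⟨p, hp⟩
  rw [Finset.sum_sub_distrib, Finset.sum_const, nsmul_eq_mul, h3]
  have h4 : ∑ P ∈ (X.powersetCard 2).filter (fun P => p ∈ P), ((lamF G P : ℤ))
      = ((∑ P ∈ (X.powersetCard 2).filter (fun P => p ∈ P), lamF G P : ℕ) : ℤ) := by
    push_cast; rfl
  rw [h4, h2]
  push_cast [Nat.cast_sub hc1]
  ring

lemma point_value (X : Finset α) (G : Multiset (Finset α))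
    (hG : ∀ A ∈ G, A.card = 3 ∧ A ⊆ X) (l : ℕ) (hrange : PairRangeOn X G l)
    (p : α) (hp : p ∈ X) :
    2 * (lamF G {p} : ℤ) = ((X.card : ℤ) - 1) * l
      + ((((Dlev X G l 1).filter fun P => p ∈ P).card : ℤ)
        - (((Dlev X G l (-1)).filter fun P => p ∈ P).card : ℤ)) := by
  have h4 := sum_dev_filter X G l hrange ((X.powersetCard 2).filter fun P => p ∈ P)
    (Finset.filter_subset _ _)
  rw [atP_inter X p (Dlev X G l 1) (Dlev_subset' X G l 1),
    atP_inter X p (Dlev X G l (-1)) (Dlev_subset' X G l (-1)),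
    sum_dev_atP X G hG l p hp] at h4
  linarith [h4]

lemma odd_set_props (X : Finset α) (G : Multiset (Finset α))
    (hG : ∀ A ∈ G, A.card = 3 ∧ A ⊆ X) (l : ℕ) (p : α) (hp : p ∈ X) :
    2 ∣ (((((X.powersetCard 2).filter fun P => ¬ (2:ℤ) ∣ ((lamF G P : ℤ) - l)).filter
        fun P => p ∈ P).card : ℤ) + ((X.card : ℤ) - 1) * l) := by
  have h1 := parity_aux ((X.powersetCard 2).filter fun P => p ∈ P)
    (fun P => (lamF G P : ℤ) - l)
  have h2 := sum_dev_atP X G hG l p hp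
  rw [h2] at h1
  have h5 : ((X.powersetCard 2).filter fun P => p ∈ P).filter
        (fun P => ¬ (2:ℤ) ∣ ((lamF G P : ℤ) - l))
      = ((X.powersetCard 2).filter fun P => ¬ (2:ℤ) ∣ ((lamF G P : ℤ) - l)).filter
        fun P => p ∈ P := Finset.filter_comm _ _ _
  rw [h5] at h1
  omega

lemma sum_dev_eq_e (X : Finset α) (v b l : ℕ) (e : ℤ) (hXc : X.card = v)
    (G : Multiset (Finset α)) (hG : ∀ A ∈ G, A.card = 3 ∧ A ⊆ X)
    (hbG : Multiset.card G = b) (hassoc : AssocPair v b l e) :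
    ∑ P ∈ X.powersetCard 2, ((lamF G P : ℤ) - l) = e := by
  obtain ⟨h6, hlo, hhi⟩ := hassoc
  have hv1 : 1 ≤ v := by omega
  have h2w := two_mul_choose_two v
  have hw : 2 * ((v.choose 2 : ℤ)) = (v : ℤ) * ((v : ℤ) - 1) := by
    have hc := congrArg (Nat.cast : ℕ → ℤ) h2w
    push_cast [Nat.cast_sub hv1] at hc
    linarith [hc]
  have hcard : (X.powersetCard 2).card = v.choose 2 := by
    rw [Finset.card_powersetCard, hXc]
  have hsum3 : ∑ P ∈ X.powersetCard 2, lamF G P = 3 * b := by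
    rw [sum_lamF_powersetCard X G hG 2, hbG]
    norm_num [Nat.choose]
  have h4 : ∑ P ∈ X.powersetCard 2, ((lamF G P : ℤ))
      = ((∑ P ∈ X.powersetCard 2, lamF G P : ℕ) : ℤ) := by push_cast; rfl
  rw [Finset.sum_sub_distrib, Finset.sum_const, nsmul_eq_mul, h4, hsum3, hcard]
  have key : (l : ℤ) * v * ((v : ℤ) - 1) = 2 * ((v.choose 2 : ℤ) * l) := by
    linear_combination (-(l : ℤ)) * hw
  push_cast
  linarith [h6, key]

lemma sum_lam_sq_expand (s : Finset (Finset α)) (G : Multiset (Finset α)) (l : ℕ) :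
    ∑ P ∈ s, (lamF G P : ℤ) ^ 2
      = ∑ P ∈ s, ((lamF G P : ℤ) - l) ^ 2
        + 2 * l * (∑ P ∈ s, ((lamF G P : ℤ) - l)) + s.card * (l : ℤ) ^ 2 := by
  have h : ∀ P ∈ s, (lamF G P : ℤ) ^ 2
      = ((lamF G P : ℤ) - l) ^ 2 + (2 * l) * ((lamF G P : ℤ) - l) + (l : ℤ) ^ 2 :=
    fun P _ => by ring
  rw [Finset.sum_congr rfl h, Finset.sum_add_distrib, Finset.sum_add_distrib,
    Finset.sum_const, ← Finset.mul_sum, nsmul_eq_mul]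

lemma Dlev_disjoint (X : Finset α) (G : Multiset (Finset α)) (l : ℕ) :
    Disjoint (Dlev X G l 1) (Dlev X G l (-1)) := by
  rw [Finset.disjoint_left]
  intro P h1 h2
  rw [Dlev, Finset.mem_filter] at h1 h2
  omega

lemma point_two_value (X : Finset α) (G : Multiset (Finset α))
    (hG : ∀ A ∈ G, A.card = 3 ∧ A ⊆ X) (l : ℕ) (hrange : PairRangeOn X G l)
    (c : ℤ)
    (hδ : ∀ p ∈ X, ((((Dlev X G l 1).filter fun P => p ∈ P).card : ℤ)
          - (((Dlev X G l (-1)).filter fun P => p ∈ P).card : ℤ) = c)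
        ∨ ((((Dlev X G l 1).filter fun P => p ∈ P).card : ℤ)
          - (((Dlev X G l (-1)).filter fun P => p ∈ P).card : ℤ) = c + 2))
    (hne : X.Nonempty) :
    (∃ m : ℤ, ∀ p ∈ X, (lamF G {p} : ℤ) = m ∨ (lamF G {p} : ℤ) = m + 1) ∧
      2 ∣ (((X.card : ℤ) - 1) * l + c) := by
  obtain ⟨p0, hp0⟩ := hne
  have h0 := point_value X G hG l hrange p0 hp0
  have hpar : 2 ∣ (((X.card : ℤ) - 1) * l + c) := by
    rcases hδ p0 hp0 with h | h <;> omega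
  obtain ⟨t, ht⟩ := hpar
  refine ⟨⟨t, ?_⟩, ⟨t, ht⟩⟩
  intro p hp
  have h1 := point_value X G hG l hrange p hp
  rcases hδ p hp with h | h <;> omega

lemma S1_from_point (X : Finset α) (F F' : Multiset (Finset α))
    (hGF : ∀ A ∈ F, A.card = 3 ∧ A ⊆ X) (hGF' : ∀ A ∈ F', A.card = 3 ∧ A ⊆ X)
    (hb : Multiset.card F = Multiset.card F')
    (hpoint : ∃ m : ℤ, ∀ p ∈ X, (lamF F {p} : ℤ) = m ∨ (lamF F {p} : ℤ) = m + 1) :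
    ∑ T ∈ X.powersetCard 1, (lamF F T : ℤ) ^ 2
      ≤ ∑ T ∈ X.powersetCard 1, (lamF F' T : ℤ) ^ 2 := by
  obtain ⟨m, hm⟩ := hpoint
  apply two_value_min _ _ _ m
  · intro T hT
    obtain ⟨hTX, hT1⟩ := Finset.mem_powersetCard.mp hT
    obtain ⟨p, rfl⟩ := Finset.card_eq_one.mp hT1
    exact hm p (hTX (Finset.mem_singleton_self p))
  · have h1 := sum_lamF_powersetCard X F hGF 1
    have h2 := sum_lamF_powersetCard X F' hGF' 1
    have h3 : ∑ T ∈ X.powersetCard 1, lamF F T = ∑ T ∈ X.powersetCard 1, lamF F' T := by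
      rw [h1, h2, hb]
    calc ∑ T ∈ X.powersetCard 1, (lamF F T : ℤ)
        = ((∑ T ∈ X.powersetCard 1, lamF F T : ℕ) : ℤ) := by push_cast; rfl
      _ = ((∑ T ∈ X.powersetCard 1, lamF F' T : ℕ) : ℤ) := by rw [h3]
      _ = ∑ T ∈ X.powersetCard 1, (lamF F' T : ℤ) := by push_cast; rfl

lemma S3_le (X : Finset α) (F F' : Multiset (Finset α))
    (hGF : ∀ A ∈ F, A.card = 3 ∧ A ⊆ X) (hGF' : ∀ A ∈ F', A.card = 3 ∧ A ⊆ X)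
    (hb : Multiset.card F = Multiset.card F')
    (hbal : ThreeBalancedOn X F) :
    ∑ T ∈ X.powersetCard 3, (lamF F T : ℤ) ^ 2
      ≤ ∑ T ∈ X.powersetCard 3, (lamF F' T : ℤ) ^ 2 := by
  have hsum : ∑ T ∈ X.powersetCard 3, (lamF F T : ℤ) = ∑ T ∈ X.powersetCard 3, (lamF F' T : ℤ) := by
    have h1 := sum_lamF_powersetCard X F hGF 3
    have h2 := sum_lamF_powersetCard X F' hGF' 3
    have h3 : ∑ T ∈ X.powersetCard 3, lamF F T = ∑ T ∈ X.powersetCard 3, lamF F' T := by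
      rw [h1, h2, hb]
    calc ∑ T ∈ X.powersetCard 3, (lamF F T : ℤ)
        = ((∑ T ∈ X.powersetCard 3, lamF F T : ℕ) : ℤ) := by push_cast; rfl
      _ = ((∑ T ∈ X.powersetCard 3, lamF F' T : ℕ) : ℤ) := by rw [h3]
      _ = ∑ T ∈ X.powersetCard 3, (lamF F' T : ℤ) := by push_cast; rfl
  by_cases hne : (X.powersetCard 3).Nonempty
  · obtain ⟨T0, hT0, hmin⟩ := Finset.exists_min_image (X.powersetCard 3) (fun T => lamF F T) hne
    apply two_value_min _ _ _ (lamF F T0 : ℤ) _ hsum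
    intro T hT
    have hlow := hmin T hT
    have hcards : ∀ A ∈ F, A.card = 3 := fun A hA => (hGF A hA).1
    have hup : lamF F T ≤ lamF F T0 + 1 := by
      have hb1 := hbal T hT T0 hT0
      rw [lamF_eq_count F hcards T (Finset.mem_powersetCard.mp hT).2,
        lamF_eq_count F hcards T0 (Finset.mem_powersetCard.mp hT0).2]
      exact hb1
    omega
  · rw [Finset.not_nonempty_iff_eq_empty] at hne
    rw [hne]
    simp

lemma S2_lower (X : Finset α) (G : Multiset (Finset α))
    (hG : ∀ A ∈ G, A.card = 3 ∧ A ⊆ X) (l : ℕ) (e : ℤ)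
    (hdev : ∑ P ∈ X.powersetCard 2, ((lamF G P : ℤ) - l) = e) :
    (2 ∣ (((X.card : ℤ) - 1) * l) → ¬ 2 ∣ e →
      3 ≤ ∑ P ∈ X.powersetCard 2, ((lamF G P : ℤ) - l) ^ 2) ∧
    (2 ∣ (((X.card : ℤ) - 1) * l) → e ≠ 0 → 2 ∣ e →
      4 ≤ ∑ P ∈ X.powersetCard 2, ((lamF G P : ℤ) - l) ^ 2) ∧
    (¬ 2 ∣ (((X.card : ℤ) - 1) * l) →
      (X.card : ℤ) ≤ 2 * ∑ P ∈ X.powersetCard 2, ((lamF G P : ℤ) - l) ^ 2) := by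
  classical
  set O : Finset (Finset α) :=
    (X.powersetCard 2).filter (fun P => ¬ (2:ℤ) ∣ ((lamF G P : ℤ) - l)) with hOdef
  have hO2 : ∀ P ∈ O, P.card = 2 ∧ P ⊆ X := by
    intro P hP
    have hPP := Finset.mem_powersetCard.mp (Finset.filter_subset _ _ hP)
    exact ⟨hPP.2, hPP.1⟩
  have hOle : (O.card : ℤ) ≤ ∑ P ∈ X.powersetCard 2, ((lamF G P : ℤ) - l) ^ 2 :=
    sum_sq_ge_odd_card (X.powersetCard 2) (fun P => (lamF G P : ℤ) - l)
  have hOpar : 2 ∣ (e - O.card) := by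
    have h := parity_aux (X.powersetCard 2) (fun P => (lamF G P : ℤ) - l)
    rw [hdev] at h
    exact h
  have hdegpar : ∀ p ∈ X, 2 ∣ (((O.filter fun P => p ∈ P).card : ℤ)
      + ((X.card : ℤ) - 1) * l) := fun p hp => odd_set_props X G hG l p hp
  refine ⟨?_, ?_, ?_⟩
  · intro hpar he
    have hOodd : ¬ 2 ∣ (O.card : ℤ) := by omega
    have hOne : O.Nonempty := by
      rw [← Finset.card_pos]
      by_contra h0
      push_neg at h0
      interval_cases hOc : O.card
      · simp at hOodd
    have hdegeven : ∀ p ∈ X, 2 ∣ (O.filter fun P => p ∈ P).card := by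
      intro p hp
      have h1 := hdegpar p hp
      have h2 : (2:ℤ) ∣ ((O.filter fun P => p ∈ P).card : ℤ) := by omega
      exact_mod_cast h2
    have h3 := even_degree_card_ge_three X O hO2 hdegeven hOne
    have : (3 : ℤ) ≤ (O.card : ℤ) := by exact_mod_cast h3
    linarith
  · intro hpar hne0 he2
    by_cases hOz : O.card = 0
    · have hOempty : O = ∅ := Finset.card_eq_zero.mp hOz
      have hallev : ∀ P ∈ X.powersetCard 2, (2:ℤ) ∣ ((lamF G P : ℤ) - l) := by
        intro P hP
        by_contra hodd
        have hmem : P ∈ O := Finset.mem_filter.mpr ⟨hP, hodd⟩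
        rw [hOempty] at hmem
        exact absurd hmem (Finset.notMem_empty P)
      have hex : ∃ P ∈ X.powersetCard 2, ((lamF G P : ℤ) - l) ≠ 0 := by
        by_contra hall
        push_neg at hall
        have hz : ∑ P ∈ X.powersetCard 2, ((lamF G P : ℤ) - l) = 0 :=
          Finset.sum_eq_zero hall
        rw [hdev] at hz
        exact hne0 hz
      obtain ⟨P, hP, hPne⟩ := hex
      have h4 : (4:ℤ) ≤ ((lamF G P : ℤ) - l) ^ 2 := by
        obtain ⟨k, hk⟩ := hallev P hP
        have hk0 : k ≠ 0 := by rintro rfl; rw [mul_zero] at hk; exact hPne hk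
        have h5 : 1 ≤ |k| := Int.one_le_abs hk0
        nlinarith [sq_abs k, hk]
      have h6 := Finset.single_le_sum
        (f := fun P => ((lamF G P : ℤ) - l) ^ 2) (fun i _ => sq_nonneg _) hP
      linarith
    · have hOne : O.Nonempty := Finset.card_pos.mp (Nat.pos_of_ne_zero hOz)
      have hdegeven : ∀ p ∈ X, 2 ∣ (O.filter fun P => p ∈ P).card := by
        intro p hp
        have h1 := hdegpar p hp
        have h2 : (2:ℤ) ∣ ((O.filter fun P => p ∈ P).card : ℤ) := by omega
        exact_mod_cast h2
      have h3 := even_degree_card_ge_three X O hO2 hdegeven hOne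
      have h4 : (4 : ℤ) ≤ (O.card : ℤ) := by
        have h5 : (3 : ℤ) ≤ (O.card : ℤ) := by exact_mod_cast h3
        omega
      linarith
  · intro hodd
    have hdeg1 : ∀ p ∈ X, 1 ≤ (O.filter fun P => p ∈ P).card := by
      intro p hp
      have h1 := hdegpar p hp
      by_contra h0
      push_neg at h0
      have hc0 : (O.filter fun P => p ∈ P).card = 0 := by omega
      rw [hc0] at h1
      simp only [Nat.cast_zero, zero_add] at h1
      exact hodd h1
    have hhs := handshake X O hO2
    have hXle : X.card ≤ 2 * O.card := by
      rw [← hhs]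
      calc X.card = ∑ _p ∈ X, 1 := by rw [Finset.sum_const, smul_eq_mul, mul_one]
        _ ≤ ∑ p ∈ X, (O.filter fun P => p ∈ P).card := Finset.sum_le_sum hdeg1
    have : (X.card : ℤ) ≤ 2 * (O.card : ℤ) := by exact_mod_cast hXle
    linarith

set_option maxHeartbeats 1000000 in
/-- a nearly well-balanced triple system is an optimal data
placement for triple replication. -/
theorem stmt_2 (v b : ℕ) (hcond : CondC1 v b ∨ CondC2 v b)
    (F : Multiset (Finset (Fin v)))
    (hF : IsNWBTSOn Finset.univ v b F) :
    IsOptimalDP v b F := by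
  obtain ⟨hTS, hbal, l, e, hl, hassoc, hrange, hshape⟩ := hF
  refine ⟨hTS, ?_⟩
  intro F' hTS' x hx
  set X : Finset (Fin v) := Finset.univ with hXdef
  obtain ⟨hXc, hbF, hGF⟩ := hTS
  obtain ⟨-, hbF', hGF'⟩ := hTS'
  have hbb : Multiset.card F = Multiset.card F' := by rw [hbF, hbF']
  have hv1 : 1 ≤ v := by
    obtain ⟨h1, h2, h3⟩ := hassoc; omega
  have hXne : X.Nonempty := by
    rw [← Finset.card_pos, hXc]; omega
  set D1 := Dlev X F l 1 with hD1def
  set Dm := Dlev X F l (-1) with hDmdef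
  have hdisj : Disjoint D1 Dm := Dlev_disjoint X F l
  have hdevF := sum_dev_eq_e X v b l e hXc F hGF hbF hassoc
  have hdevF' := sum_dev_eq_e X v b l e hXc F' hGF' hbF' hassoc
  have hsqselF := sum_dev_sq_filter X F l hrange (X.powersetCard 2) subset_rfl
  have hIeq1 : X.powersetCard 2 ∩ D1 = D1 := Finset.inter_eq_right.mpr (Dlev_subset' X F l 1)
  have hIeqm : X.powersetCard 2 ∩ Dm = Dm := Finset.inter_eq_right.mpr (Dlev_subset' X F l (-1))
  rw [hIeq1, hIeqm] at hsqselF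
  have hS2low := S2_lower X F' hGF' l e hdevF'
  have hsq'par : 2 ∣ (∑ P ∈ X.powersetCard 2, ((lamF F' P : ℤ) - l) ^ 2 - e) := by
    have h := sq_parity (X.powersetCard 2) (fun P => (lamF F' P : ℤ) - l)
    rw [hdevF'] at h; exact h
  have hcore : (∃ m : ℤ, ∀ p ∈ X, (lamF F {p} : ℤ) = m ∨ (lamF F {p} : ℤ) = m + 1) ∧
      (∑ P ∈ X.powersetCard 2, ((lamF F P : ℤ) - l) ^ 2
        ≤ ∑ P ∈ X.powersetCard 2, ((lamF F' P : ℤ) - l) ^ 2) := by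
    rcases hshape with ⟨hc1, hsh⟩ | ⟨hc2, hsh⟩
    · -- condition (C1)
      rcases hsh with ⟨he, htri, hcard1, hcardm⟩ | ⟨he, htri, hcard1, hcardm⟩ |
        ⟨he, hfour, hcard1, hcardm⟩ | ⟨he, hfour, hcard1, hcardm⟩
      · -- e = 1, triangle
        obtain ⟨xx, yy, zz, hxy, hxz, hyz, hEq⟩ := htri
        have hdeg : ∀ p : Fin v, ((D1 ∪ Dm).filter fun P => p ∈ P).card = 0
            ∨ ((D1 ∪ Dm).filter fun P => p ∈ P).card = 2 := by
          intro p; rw [hEq]; exact degE_triangle xx yy zz p hxy hxz hyz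
        obtain ⟨hpoint, hpar0⟩ := point_two_value X F hGF l hrange 0
          (fun p _ => delta_C1 D1 Dm hdisj hdeg hcardm p) hXne
        rw [add_zero] at hpar0
        refine ⟨hpoint, ?_⟩
        have h3 := hS2low.1 hpar0 (by omega)
        rw [hsqselF, hcard1, hcardm]
        push_cast
        linarith [h3]
      · -- e = -1, triangle
        obtain ⟨xx, yy, zz, hxy, hxz, hyz, hEq⟩ := htri
        have hdeg : ∀ p : Fin v, ((D1 ∪ Dm).filter fun P => p ∈ P).card = 0
            ∨ ((D1 ∪ Dm).filter fun P => p ∈ P).card = 2 := by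
          intro p; rw [hEq]; exact degE_triangle xx yy zz p hxy hxz hyz
        obtain ⟨hpoint, hpar0⟩ := point_two_value X F hGF l hrange (-2)
          (fun p _ => delta_C1' D1 Dm hdisj hdeg hcard1 p) hXne
        have hpar : 2 ∣ (((X.card : ℤ) - 1) * l) := by omega
        refine ⟨hpoint, ?_⟩
        have h3 := hS2low.1 hpar (by omega)
        rw [hsqselF, hcard1, hcardm]
        push_cast
        linarith [h3]
      · -- e = 2, four-cycle
        obtain ⟨xx, yy, zz, ww, hxy, hxz, hxw, hyz, hyw, hzw, hEq⟩ := hfour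
        have hdeg : ∀ p : Fin v, ((D1 ∪ Dm).filter fun P => p ∈ P).card = 0
            ∨ ((D1 ∪ Dm).filter fun P => p ∈ P).card = 2 := by
          intro p; rw [hEq]; exact degE_fourcycle xx yy zz ww p hxy hxz hxw hyz hyw hzw
        obtain ⟨hpoint, hpar0⟩ := point_two_value X F hGF l hrange 0
          (fun p _ => delta_C1 D1 Dm hdisj hdeg hcardm p) hXne
        rw [add_zero] at hpar0
        refine ⟨hpoint, ?_⟩
        have h3 := hS2low.2.1 hpar0 (by omega) (by omega)
        rw [hsqselF, hcard1, hcardm]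
        push_cast
        linarith [h3]
      · -- e = -2, four-cycle
        obtain ⟨xx, yy, zz, ww, hxy, hxz, hxw, hyz, hyw, hzw, hEq⟩ := hfour
        have hdeg : ∀ p : Fin v, ((D1 ∪ Dm).filter fun P => p ∈ P).card = 0
            ∨ ((D1 ∪ Dm).filter fun P => p ∈ P).card = 2 := by
          intro p; rw [hEq]; exact degE_fourcycle xx yy zz ww p hxy hxz hxw hyz hyw hzw
        obtain ⟨hpoint, hpar0⟩ := point_two_value X F hGF l hrange (-2)
          (fun p _ => delta_C1' D1 Dm hdisj hdeg hcard1 p) hXne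
        have hpar : 2 ∣ (((X.card : ℤ) - 1) * l) := by omega
        refine ⟨hpoint, ?_⟩
        have h3 := hS2low.2.1 hpar (by omega) (by omega)
        rw [hsqselF, hcard1, hcardm]
        push_cast
        linarith [h3]
    · -- condition (C2)
      have hveven : v % 2 = 0 := hc2.1
      rcases hsh with ⟨hm4, hpm, h41, h4m⟩ |
        ⟨hm4, cc, a2, a3, a4, star, hcX, h2X, h3X, h4X, hcc2, hcc3, hcc4, h23, h24, h34,
          hstarEq, hsub, hpm, hsplit⟩
      · -- perfect matching
        simp only [← hD1def, ← hDmdef] at h41 h4m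
        have hδ : ∀ p ∈ X, (((D1.filter fun P => p ∈ P).card : ℤ)
              - ((Dm.filter fun P => p ∈ P).card : ℤ) = -1)
            ∨ (((D1.filter fun P => p ∈ P).card : ℤ)
              - ((Dm.filter fun P => p ∈ P).card : ℤ) = -1 + 2) := by
          intro p hp
          have h1 := matching_deg X (D1 ∪ Dm) hpm p hp
          have h2 := deg_union_eq D1 Dm hdisj p
          omega
        obtain ⟨hpoint, hparm1⟩ := point_two_value X F hGF l hrange (-1) hδ hXne
        refine ⟨hpoint, ?_⟩
        have hodd : ¬ 2 ∣ (((X.card : ℤ) - 1) * l) := by omega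
        have h3 := hS2low.2.2 hodd
        have hXv : (X.card : ℤ) = (v : ℤ) := by exact_mod_cast congrArg (Nat.cast : ℕ → ℤ) hXc
        rw [hsqselF]
        linarith [h3, h41, h4m, hXv]
      · -- star plus matching
        subst hstarEq
        have hδ : ∀ p ∈ X, (((D1.filter fun P => p ∈ P).card : ℤ)
              - ((Dm.filter fun P => p ∈ P).card : ℤ) = -1)
            ∨ (((D1.filter fun P => p ∈ P).card : ℤ)
              - ((Dm.filter fun P => p ∈ P).card : ℤ) = -1 + 2) := by
          intro p hp
          have h1 := delta_star X D1 Dm hdisj cc a2 a3 a4 hcc2 hcc3 hcc4 h23 h24 h34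
            hsub hpm.1 hpm.2 (hsplit.imp (fun h => ⟨h.1, h.2.1⟩) (fun h => ⟨h.1, h.2.1⟩)) p hp
          rcases h1 with h | h
          · exact Or.inl h
          · right; omega
        obtain ⟨hpoint, hparm1⟩ := point_two_value X F hGF l hrange (-1) hδ hXne
        refine ⟨hpoint, ?_⟩
        have hodd : ¬ 2 ∣ (((X.card : ℤ) - 1) * l) := by omega
        have h3 := hS2low.2.2 hodd
        have hXv : (X.card : ℤ) = (v : ℤ) := by exact_mod_cast congrArg (Nat.cast : ℕ → ℤ) hXc
        set starS : Finset (Finset (Fin v)) :=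
          {({cc, a2} : Finset (Fin v)), {cc, a3}, {cc, a4}} with hstarS
        have e1 : (starS ∩ D1).card + (D1 \ starS).card = D1.card := by
          rw [Finset.inter_comm]
          exact Finset.card_inter_add_card_sdiff D1 starS
        have em : (starS ∩ Dm).card + (Dm \ starS).card = Dm.card := by
          rw [Finset.inter_comm]
          exact Finset.card_inter_add_card_sdiff Dm starS
        rw [hsqselF]
        set S' : ℤ := ∑ P ∈ X.powersetCard 2, ((lamF F' P : ℤ) - l) ^ 2 with hS'
        rcases hsplit with ⟨hsA, hsB, hs1, hs2⟩ | ⟨hsA, hsB, hs1, hs2⟩ <;>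
          simp only [← hD1def, ← hDmdef, ← hstarS] at hsA hsB hs1 hs2 <;> omega
  obtain ⟨hpoint, hS2devle⟩ := hcore
  rw [Pval_eq X F hGF x, Pval_eq X F' hGF' x]
  apply Finset.sum_le_sum
  intro k hk
  have hk4 : k < 4 := Finset.mem_range.mp hk
  have hxk : (0:ℝ) ≤ (x - 1) ^ k := pow_nonneg (by linarith) k
  apply mul_le_mul_of_nonneg_right _ hxk
  rw [Nat.cast_le]
  have hZ : ∑ T ∈ X.powersetCard k, (lamF F T : ℤ) ^ 2
      ≤ ∑ T ∈ X.powersetCard k, (lamF F' T : ℤ) ^ 2 := by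
    interval_cases k
    · rw [Finset.powersetCard_zero, Finset.sum_singleton, Finset.sum_singleton,
        lamF_empty, lamF_empty, hbb]
    · exact S1_from_point X F F' hGF hGF' hbb hpoint
    · rw [sum_lam_sq_expand _ F l, sum_lam_sq_expand _ F' l, hdevF, hdevF']
      linarith [hS2devle]
    · exact S3_le X F F' hGF hGF' hbb hbal
  simp only [sq] at hZ
  exact_mod_cast hZ

end DataPlacement
end
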